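/- arXiv:2007.06265 — 8 statements merged into one kernel-verified Lean document; each statement's English description precedes it below -/
import Mathlib

section
/- The pair (G(r,d,n), S_n) is a weakly symmetric Gelfand pair: the automorphism f of G(r,d,n) sending (ξ^{a_1}, ..., ξ^{a_n}, σ) to (ξ^{-a_1}, ..., ξ^{-a_n}, σ) satisfies g^{-1} ∈ S_n · f(g) · S_n for all g ∈ G(r,d,n). In particular, the convolution algebra of bi-S_n-invariant functions on G(r,d,n) is commutative. -/
open SemidirectProduct

/-- The permutation action of `S_n` on `C_r^n` by permuting coordinates. -/
def wreathAut (r n : ℕ) : Equiv.Perm (Fin n) →* MulAut (Fin n → Multiplicative (ZMod r)) where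
  toFun σ := MulEquiv.arrowCongr σ (MulEquiv.refl _)
  map_one' := by ext f i; rfl
  map_mul' σ τ := by ext f i; rfl

/-- The wreath product `G(r,1,n) = C_r ≀ S_n`. -/
abbrev Gr1n (r n : ℕ) := (Fin n → Multiplicative (ZMod r)) ⋊[wreathAut r n] Equiv.Perm (Fin n)

instance (r n : ℕ) [NeZero r] : Finite (Gr1n r n) :=
  Finite.of_injective (fun g => (g.left, g.right))
    (by intro a b h
        exact SemidirectProduct.ext (congrArg Prod.fst h) (congrArg Prod.snd h))

/-- The homomorphism `Φ : G(r,1,n) → C_d`, `(ξ₁,…,ξₙ,σ) ↦ (ξ₁⋯ξₙ)^{r/d}`,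
realised additively with values in `ZMod d`. -/
def PhiHom (r d n : ℕ) (h : d ∣ r) : Gr1n r n →* Multiplicative (ZMod d) where
  toFun g := Multiplicative.ofAdd (ZMod.castHom h (ZMod d) (∑ i, Multiplicative.toAdd (g.left i)))
  map_one' := by simp
  map_mul' g₁ g₂ := by
    have hl : (g₁ * g₂).left = g₁.left * wreathAut r n g₁.right g₂.left :=
      SemidirectProduct.mul_left g₁ g₂
    have hperm : (∑ i, Multiplicative.toAdd (wreathAut r n g₁.right g₂.left i))
        = ∑ i, Multiplicative.toAdd (g₂.left i) := by
      have := Equiv.sum_comp (g₁.right.symm) (fun i => Multiplicative.toAdd (g₂.left i))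
      simpa [wreathAut] using this
    simp [hl, Finset.sum_add_distrib, hperm, map_add]

/-- `S_n` as a subgroup of the wreath product. -/
def SnSub (r n : ℕ) : Subgroup (Gr1n r n) := (inr : Equiv.Perm (Fin n) →* Gr1n r n).range

open scoped Classical

noncomputable instance (r n : ℕ) [NeZero r] : Fintype (Gr1n r n) := Fintype.ofFinite _

/-- Convolution over a subgroup `K` of functions on `G`:
`(f₁ * f₂)(x) = Σ_{t ∈ K} f₁(t) f₂(t⁻¹ x)`. -/
noncomputable def convOn {G : Type*} [Group G] [Fintype G] (K : Subgroup G)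
    (f₁ f₂ : G → ℂ) (x : G) : ℂ :=
  ∑ t : K, f₁ t * f₂ ((t : G)⁻¹ * x)

/-- The inversion map `(ξ^{a₁}, …, ξ^{aₙ}, σ) ↦ (ξ^{-a₁}, …, ξ^{-aₙ}, σ)` on `G(r,1,n)`. -/
def fmap (r n : ℕ) : Gr1n r n → Gr1n r n := fun g => ⟨g.left⁻¹, g.right⟩

/-!
If an automorphism `φ` of `G` preserves `K` and `g⁻¹ ∈ H φ(g) H` for all `g ∈ K`, then every
bi-`H`-invariant `f` satisfies `f(y) = f(φ(y)⁻¹)`. Rewriting both factors of `f₁ * f₂` this way,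
reindexing the sum by `φ`, and absorbing the `H`-factors of `φ(x)⁻¹ ∈ H x H` into `f₁` and `f₂`
turns `f₁ * f₂` into `f₂ * f₁`. For `G(r,d,n)` one takes `φ = fmap`, which works because
`g⁻¹ = σ⁻¹ · fmap g · σ⁻¹` for `g = (ξ^a, σ)`.
-/

open Finset

section WeaklySymmetric

variable {G : Type*} [Group G]

def IsBiInvariantOn (H K : Subgroup G) (f : G → ℂ) : Prop :=
  ∀ h₁ ∈ H, ∀ g ∈ K, ∀ h₂ ∈ H, f (h₁ * g * h₂) = f g

variable {H K : Subgroup G} {φ : G ≃* G}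

lemma IsBiInvariantOn.apply_eq_apply_inv_map {f : G → ℂ} (hf : IsBiInvariantOn H K f)
    (hφK : ∀ g ∈ K, φ g ∈ K)
    (hsymm : ∀ g ∈ K, ∃ h₁ ∈ H, ∃ h₂ ∈ H, g⁻¹ = h₁ * φ g * h₂) {y : G} (hy : y ∈ K) :
    f y = f (φ y)⁻¹ := by
  obtain ⟨a, ha, b, hb, e⟩ := hsymm y⁻¹ (K.inv_mem hy)
  rw [inv_inv, map_inv] at e
  rw [← hf a ha _ (K.inv_mem (hφK y hy)) b hb, ← e]

lemma inv_map_mem_doubleCoset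
    (hsymm : ∀ g ∈ K, ∃ h₁ ∈ H, ∃ h₂ ∈ H, g⁻¹ = h₁ * φ g * h₂) {x : G} (hx : x ∈ K) :
    ∃ a ∈ H, ∃ b ∈ H, (φ x)⁻¹ = a * x * b := by
  obtain ⟨h₁, hh₁, h₂, hh₂, e⟩ := hsymm x hx
  refine ⟨h₂, hh₂, h₁, hh₁, ?_⟩
  rw [show φ x = h₁⁻¹ * x⁻¹ * h₂⁻¹ by rw [e]; group]
  group

theorem convOn_comm_of_inv_mem_doubleCoset [Fintype G] (hHK : H ≤ K)
    (hφK : ∀ g ∈ K, φ g ∈ K)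
    (hsymm : ∀ g ∈ K, ∃ h₁ ∈ H, ∃ h₂ ∈ H, g⁻¹ = h₁ * φ g * h₂)
    {f₁ f₂ : G → ℂ} (hf₁ : IsBiInvariantOn H K f₁) (hf₂ : IsBiInvariantOn H K f₂)
    {x : G} (hx : x ∈ K) :
    convOn K f₁ f₂ x = convOn K f₂ f₁ x := by
  obtain ⟨a, ha, b, hb, hφx⟩ := inv_map_mem_doubleCoset hsymm hx
  have hφ_bij : Function.Bijective fun t : K => (⟨φ t, hφK t t.2⟩ : K) :=
    Finite.injective_iff_bijective.mp fun s t hst =>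
      Subtype.ext (φ.injective (congrArg Subtype.val hst))
  let u : K := ⟨φ x, hφK x hx⟩
  let a' : K := ⟨a, hHK ha⟩
  calc ∑ t : K, f₁ t * f₂ ((t : G)⁻¹ * x)
      = ∑ t : K, f₁ (φ t)⁻¹ * f₂ ((φ x)⁻¹ * φ t) := by
        refine sum_congr rfl fun t _ => ?_
        rw [hf₁.apply_eq_apply_inv_map hφK hsymm t.2,
          hf₂.apply_eq_apply_inv_map hφK hsymm (K.mul_mem (K.inv_mem t.2) hx)]
        simp only [map_mul, map_inv, mul_inv_rev, inv_inv]
    _ = ∑ s : K, f₁ (s : G)⁻¹ * f₂ ((φ x)⁻¹ * s) :=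
        Fintype.sum_bijective _ hφ_bij _ _ fun _ => rfl
    _ = ∑ w : K, f₁ (((u * w : K) : G))⁻¹ * f₂ ((φ x)⁻¹ * (u * w : K)) :=
        (Fintype.sum_equiv (Equiv.mulLeft u) _ _ fun _ => rfl).symm
    _ = ∑ w : K, f₂ w * f₁ ((w : G)⁻¹ * a * x) := by
        refine sum_congr rfl fun w _ => ?_
        have hw : (((u * w : K) : G))⁻¹ = 1 * ((w : G)⁻¹ * a * x) * b := by
          simp only [Subgroup.coe_mul, mul_inv_rev, hφx, u]
          group
        rw [hw, hf₁ 1 H.one_mem _ (K.mul_mem (K.mul_mem (K.inv_mem w.2) (hHK ha)) hx) b hb,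
          mul_comm]
        simp only [Subgroup.coe_mul, u, inv_mul_cancel_left]
    _ = ∑ v : K, f₂ (a' * v : K) * f₁ (((a' * v : K) : G)⁻¹ * a * x) :=
        (Fintype.sum_equiv (Equiv.mulLeft a') _ _ fun _ => rfl).symm
    _ = ∑ v : K, f₂ v * f₁ ((v : G)⁻¹ * x) := by
        refine sum_congr rfl fun v _ => ?_
        have hv : f₂ (a' * v : K) = f₂ v := by
          simpa using hf₂ a ha v v.2 1 H.one_mem
        rw [hv]
        simp only [Subgroup.coe_mul, mul_inv_rev, a', inv_mul_cancel_right]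

end WeaklySymmetric

section WreathProduct

variable {r n : ℕ}

lemma fmap_mul (g₁ g₂ : Gr1n r n) : fmap r n (g₁ * g₂) = fmap r n g₁ * fmap r n g₂ := by
  refine SemidirectProduct.ext ?_ rfl
  show ((g₁ * g₂).left)⁻¹ = (g₁.left)⁻¹ * wreathAut r n g₁.right (g₂.left)⁻¹
  rw [SemidirectProduct.mul_left, mul_inv, map_inv]

lemma fmap_involutive : Function.Involutive (fmap r n) := fun _ =>
  SemidirectProduct.ext (inv_inv _) rfl

def fmapEquiv (r n : ℕ) : Gr1n r n ≃* Gr1n r n :=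
  MulEquiv.mk' fmap_involutive.toPerm fmap_mul

lemma inv_eq_inr_mul_fmap_mul_inr (g : Gr1n r n) :
    g⁻¹ = inr g.right⁻¹ * fmap r n g * inr g.right⁻¹ := by
  refine SemidirectProduct.ext ?_ ?_
  · simp [SemidirectProduct.mul_left, SemidirectProduct.inv_left, fmap]
  · simp [SemidirectProduct.mul_right, SemidirectProduct.inv_right, fmap]

variable {d : ℕ} (h : d ∣ r)

lemma PhiHom_fmap (g : Gr1n r n) : PhiHom r d n h (fmap r n g) = (PhiHom r d n h g)⁻¹ := by
  simp only [PhiHom, MonoidHom.coe_mk, OneHom.coe_mk, fmap, Pi.inv_apply, toAdd_inv,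
    sum_neg_distrib, map_neg, ofAdd_neg]

lemma fmap_mem_ker {g : Gr1n r n} (hg : g ∈ (PhiHom r d n h).ker) :
    fmap r n g ∈ (PhiHom r d n h).ker := by
  rw [MonoidHom.mem_ker, PhiHom_fmap, hg, inv_one]

lemma SnSub_le_ker : SnSub r n ≤ (PhiHom r d n h).ker := by
  rintro _ ⟨σ, rfl⟩
  simp [MonoidHom.mem_ker, PhiHom]

end WreathProduct

/-- `(G(r,d,n), S_n)` is a weakly symmetric Gelfand pair: the map
`f : (ξ^{a₁},…,ξ^{aₙ},σ) ↦ (ξ^{-a₁},…,ξ^{-aₙ},σ)` is an automorphism of `G(r,d,n)`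
satisfying `g⁻¹ ∈ S_n · f(g) · S_n` for all `g ∈ G(r,d,n)`; in particular the convolution
algebra of bi-`S_n`-invariant functions on `G(r,d,n)` is commutative. -/
theorem Grdn_weakly_symmetric_gelfand (r d n : ℕ) [NeZero r] (h : d ∣ r) :
    (∀ g₁ g₂ : Gr1n r n, fmap r n (g₁ * g₂) = fmap r n g₁ * fmap r n g₂) ∧
    Function.Bijective (fmap r n) ∧
    (∀ g ∈ (PhiHom r d n h).ker, fmap r n g ∈ (PhiHom r d n h).ker) ∧
    (∀ g ∈ (PhiHom r d n h).ker,
      ∃ h₁ ∈ SnSub r n, ∃ h₂ ∈ SnSub r n, g⁻¹ = h₁ * fmap r n g * h₂) ∧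
    (∀ f₁ f₂ : Gr1n r n → ℂ,
      (∀ h₁ ∈ SnSub r n, ∀ g ∈ (PhiHom r d n h).ker, ∀ h₂ ∈ SnSub r n,
        f₁ (h₁ * g * h₂) = f₁ g) →
      (∀ h₁ ∈ SnSub r n, ∀ g ∈ (PhiHom r d n h).ker, ∀ h₂ ∈ SnSub r n,
        f₂ (h₁ * g * h₂) = f₂ g) →
      ∀ x ∈ (PhiHom r d n h).ker,
        convOn (PhiHom r d n h).ker f₁ f₂ x = convOn (PhiHom r d n h).ker f₂ f₁ x) := by
  have hsymm : ∀ g : Gr1n r n, ∃ h₁ ∈ SnSub r n, ∃ h₂ ∈ SnSub r n,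
      g⁻¹ = h₁ * fmap r n g * h₂ := fun g =>
    ⟨_, ⟨_, rfl⟩, _, ⟨_, rfl⟩, inv_eq_inr_mul_fmap_mul_inr g⟩
  refine ⟨fmap_mul, fmap_involutive.bijective, fun _ => fmap_mem_ker h, fun g _ => hsymm g, ?_⟩
  intro f₁ f₂ hf₁ hf₂ x hx
  exact convOn_comm_of_inv_mem_doubleCoset (φ := fmapEquiv r n) (SnSub_le_ker h)
    (fun _ => fmap_mem_ker h) (fun g _ => hsymm g) hf₁ hf₂ hx
end

section
/- Let (G,H) be a finite Gelfand pair, ω a zonal spherical function of (G,H), and K a subgroup of G with H ⊆ K ⊆ G such that (K,H) is also a Gelfand pair. Then the restriction ω|_K is a zonal spherical function of (K,H). Moreover, every zonal spherical function of (K,H) arises as such a restriction. -/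
open scoped Classical

/-- A function is bi-`H`-invariant on the subgroup `K` (with `H ≤ K`). -/
def BiInvariantOn {G : Type*} [Group G] (K H : Subgroup G) (f : G → ℂ) : Prop :=
  ∀ h₁ ∈ H, ∀ g ∈ K, ∀ h₂ ∈ H, f (h₁ * g * h₂) = f g

/-- `ω` is a zonal spherical function of the Gelfand pair `(K, H)`: it is a nonzero
bi-`H`-invariant function on `K` satisfying the functional equation
`(1/|H|) Σ_{h ∈ H} ω(g h k) = ω(g) ω(k)` for `g, k ∈ K`. -/
def IsZonalSpherical {G : Type*} [Group G] [Fintype G] (K H : Subgroup G)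
    (ω : G → ℂ) : Prop :=
  (∃ g ∈ K, ω g ≠ 0) ∧ BiInvariantOn K H ω ∧
    ∀ g ∈ K, ∀ k ∈ K, (1 / (Nat.card H : ℂ)) * ∑ h : H, ω (g * (h : G) * k) = ω g * ω k

/-!
Write `A_x = middleSum H x`, so that `A_x u (y) = Σ_{h ∈ H} u (x h y)`. The functional equation of a
spherical function `ω` says `A_x ω = |H| ω(x) ω`; conversely, a nonzero bi-`H`-invariant common
eigenfunction `v` of all the `A_x` is spherical once normalised by `v 1`. Restriction to `K` is
therefore immediate.

For the extension, `A_x` is, up to the factor `|H|`, convolution with the bi-invariant kernel of the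
double coset `H x⁻¹ H`, so the Gelfand property of `(G, H)` makes the `A_x` commute on
bi-invariant functions. Given a spherical function `Ω` of `(K, H)`, the space of bi-invariant `u`
with `A_x u = |H| Ω(x) u` for all `x ∈ K` contains the extension of `Ω` by zero and is stable under
every `A_g`, so it contains a common eigenvector `v`. Evaluating at `1` shows that `v / v(1)` is a
spherical function of `(G, H)` agreeing with `Ω` on `K`.
-/

theorem Module.End.exists_common_eigenvector {𝕜 E ι : Type*} [Field 𝕜] [IsAlgClosed 𝕜]
    [AddCommGroup E] [Module 𝕜 E] [FiniteDimensional 𝕜 E] (s : Finset ι)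
    (T : ι → Module.End 𝕜 E) {U : Submodule 𝕜 E} (hU : U ≠ ⊥)
    (hmaps : ∀ i ∈ s, ∀ u ∈ U, T i u ∈ U)
    (hcomm : ∀ i ∈ s, ∀ j ∈ s, ∀ u ∈ U, T i (T j u) = T j (T i u)) :
    ∃ v ∈ U, v ≠ 0 ∧ ∀ i ∈ s, ∃ c : 𝕜, T i v = c • v := by
  classical
  induction s using Finset.induction generalizing U with
  | empty =>
    obtain ⟨v, hv, hv0⟩ := Submodule.exists_mem_ne_zero_of_ne_bot hU
    exact ⟨v, hv, hv0, by simp⟩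
  | insert a s _ ih =>
    have hUa := hmaps a (Finset.mem_insert_self a s)
    have : Nontrivial U := Submodule.nontrivial_iff_ne_bot.mpr hU
    obtain ⟨μ, hμ⟩ := Module.End.exists_eigenvalue ((T a).restrict hUa)
    have hU' : U ⊓ (T a).eigenspace μ ≠ ⊥ := by
      obtain ⟨w, hw, hw0⟩ := hμ.exists_hasEigenvector
      rw [Submodule.ne_bot_iff, Submodule.inf_genEigenspace _ _ hUa]
      exact ⟨w, Submodule.mem_map_of_mem hw, by simpa using hw0⟩
    have hmaps' : ∀ i ∈ s, ∀ u ∈ U ⊓ (T a).eigenspace μ, T i u ∈ U ⊓ (T a).eigenspace μ := by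
      rintro i hi u ⟨huU, hu⟩
      refine ⟨hmaps i (Finset.mem_insert_of_mem hi) u huU, ?_⟩
      rw [SetLike.mem_coe, Module.End.mem_eigenspace_iff] at hu ⊢
      rw [hcomm a (Finset.mem_insert_self a s) i (Finset.mem_insert_of_mem hi) u huU, hu,
        map_smul]
    obtain ⟨v, ⟨hvU, hva⟩, hv0, hv⟩ := ih hU' hmaps' fun i hi j hj u hu =>
      hcomm i (Finset.mem_insert_of_mem hi) j (Finset.mem_insert_of_mem hj) u hu.1
    refine ⟨v, hvU, hv0, fun i hi => ?_⟩
    rcases Finset.mem_insert.mp hi with rfl | hi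
    · exact ⟨μ, Module.End.mem_eigenspace_iff.mp hva⟩
    · exact hv i hi

section BiInvariant

variable {G : Type*} [Group G] {H K : Subgroup G} {f : G → ℂ}

lemma BiInvariantOn.apply_mul_left (hf : BiInvariantOn K H f) {h g : G} (hh : h ∈ H)
    (hg : g ∈ K) : f (h * g) = f g := by
  simpa using hf h hh g hg 1 H.one_mem

lemma BiInvariantOn.apply_mul_right (hf : BiInvariantOn K H f) {h g : G} (hh : h ∈ H)
    (hg : g ∈ K) : f (g * h) = f g := by
  simpa using hf 1 H.one_mem g hg h hh

lemma BiInvariantOn.smul (hf : BiInvariantOn K H f) (c : ℂ) : BiInvariantOn K H (c • f) := by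
  intro h₁ hh₁ g hg h₂ hh₂
  simp only [Pi.smul_apply, hf h₁ hh₁ g hg h₂ hh₂]

lemma BiInvariantOn.indicator (hHK : H ≤ K) (hf : BiInvariantOn K H f) :
    BiInvariantOn ⊤ H ((K : Set G).indicator f) := by
  intro h₁ hh₁ g _ h₂ hh₂
  have hmem : h₁ * g * h₂ ∈ K ↔ g ∈ K := by
    rw [K.mul_mem_cancel_right (hHK hh₂), K.mul_mem_cancel_left (hHK hh₁)]
  by_cases hg : g ∈ K
  · simp [Set.indicator_of_mem, hmem.mpr hg, hg, hf h₁ hh₁ g hg h₂ hh₂]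
  · simp [Set.indicator_of_notMem, hg, mt hmem.mp hg]

def biInvariantSubmodule (H : Subgroup G) : Submodule ℂ (G → ℂ) where
  carrier := {u | BiInvariantOn ⊤ H u}
  add_mem' hu hv h₁ hh₁ g hg h₂ hh₂ := by
    simp only [Pi.add_apply, hu h₁ hh₁ g hg h₂ hh₂, hv h₁ hh₁ g hg h₂ hh₂]
  zero_mem' _ _ _ _ _ _ := rfl
  smul_mem' c _ hu := hu.smul c

lemma mem_biInvariantSubmodule {u : G → ℂ} :
    u ∈ biInvariantSubmodule H ↔ BiInvariantOn ⊤ H u :=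
  Iff.rfl

end BiInvariant

section Convolution

variable {G : Type*} [Group G] [Fintype G]

lemma convOn_top_apply (f u : G → ℂ) (x : G) : convOn ⊤ f u x = ∑ t, f t * u (t⁻¹ * x) :=
  Fintype.sum_equiv Subgroup.topEquiv.toEquiv _ _ fun _ => rfl

lemma convOn_smul_right (K : Subgroup G) (f u : G → ℂ) (c : ℂ) :
    convOn K f (c • u) = c • convOn K f u := by
  funext x
  simp [convOn, Finset.mul_sum, mul_left_comm]

lemma convOn_top_eq_coeff_mul (f u : G → ℂ) :
    convOn ⊤ f u = ⇑(MonoidAlgebra.ofCoeff (Finsupp.equivFunOnFinite.symm f) *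
      MonoidAlgebra.ofCoeff (Finsupp.equivFunOnFinite.symm u)).coeff := by
  funext x
  rw [MonoidAlgebra.coeff_mul_apply_left, convOn_top_apply, Finsupp.sum_fintype] <;> simp

lemma convOn_top_assoc (f g u : G → ℂ) :
    convOn ⊤ f (convOn ⊤ g u) = convOn ⊤ (convOn ⊤ f g) u := by
  simp only [convOn_top_eq_coeff_mul, Finsupp.equivFunOnFinite_symm_coe,
    MonoidAlgebra.ofCoeff_coeff, mul_assoc]

end Convolution

section MiddleSum

variable {G : Type*} [Group G] [Fintype G] {H K : Subgroup G}

noncomputable def doubleCosetKernel (H : Subgroup G) (x : G) : G → ℂ :=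
  fun t => ∑ h₁ : H, ∑ h₂ : H, if t = h₁ * x * h₂ then 1 else 0

lemma biInvariantOn_doubleCosetKernel (x : G) : BiInvariantOn ⊤ H (doubleCosetKernel H x) := by
  intro a ha t _ b hb
  refine Fintype.sum_equiv (Equiv.mulLeft ⟨a, ha⟩⁻¹) _ _ fun h₁ => ?_
  refine Fintype.sum_equiv (Equiv.mulRight ⟨b, hb⟩⁻¹) _ _ fun h₂ => ?_
  simp only [Equiv.coe_mulLeft, Equiv.coe_mulRight, Subgroup.coe_mul, Subgroup.coe_inv]
  refine if_congr ⟨fun h => ?_, fun h => by rw [h]; group⟩ rfl rfl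
  calc t = a⁻¹ * (a * t * b) * b⁻¹ := by group
    _ = _ := by rw [h]; group

noncomputable def middleSum (H : Subgroup G) (x : G) : Module.End ℂ (G → ℂ) :=
  ∑ h : H, LinearMap.funLeft ℂ ℂ (fun y => x * h * y)

@[simp]
lemma middleSum_apply (x : G) (u : G → ℂ) (y : G) :
    middleSum H x u y = ∑ h : H, u (x * h * y) := by
  simp [middleSum, LinearMap.funLeft_apply]

lemma middleSum_apply_one {v : G → ℂ} (hv : BiInvariantOn ⊤ H v) (x : G) :
    middleSum H x v 1 = Nat.card H * v x := by
  simp [hv.apply_mul_right _ (Subgroup.mem_top x)]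

lemma BiInvariantOn.middleSum {u : G → ℂ} (hu : BiInvariantOn ⊤ H u) (x : G) :
    BiInvariantOn ⊤ H (middleSum H x u) := by
  intro a ha y _ b hb
  simp only [middleSum_apply]
  refine Fintype.sum_equiv (Equiv.mulRight ⟨a, ha⟩) _ _ fun h => ?_
  rw [Equiv.coe_mulRight, Subgroup.coe_mul,
    ← hu.apply_mul_right hb (Subgroup.mem_top (x * (h * a) * y))]
  congr 1
  group

lemma convOn_doubleCosetKernel {u : G → ℂ} (hu : BiInvariantOn ⊤ H u) (x : G) :
    convOn ⊤ (doubleCosetKernel H x⁻¹) u = (Nat.card H : ℂ) • middleSum H x u := by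
  funext y
  have hterm (h₁ h₂ : H) : u (((h₁ : G) * x⁻¹ * h₂)⁻¹ * y) = u (x * (h₁ : G)⁻¹ * y) := by
    rw [← hu.apply_mul_left (H.inv_mem h₂.2) (Subgroup.mem_top (x * (h₁ : G)⁻¹ * y))]
    group
  calc convOn ⊤ (doubleCosetKernel H x⁻¹) u y
      = ∑ h₁ : H, ∑ h₂ : H, u (((h₁ : G) * x⁻¹ * h₂)⁻¹ * y) := by
        simp only [convOn_top_apply, doubleCosetKernel, Finset.sum_mul, ite_mul, one_mul,
          zero_mul]
        rw [Finset.sum_comm]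
        refine Finset.sum_congr rfl fun h₁ _ => ?_
        rw [Finset.sum_comm]
        simp
    _ = (Nat.card H : ℂ) * ∑ h₁ : H, u (x * (h₁ : G)⁻¹ * y) := by
        simp only [hterm]
        simp [Finset.mul_sum]
    _ = (Nat.card H : ℂ) • middleSum H x u y := by
        rw [middleSum_apply, smul_eq_mul]
        congr 1
        exact Fintype.sum_equiv (Equiv.inv H) _ _ fun h => rfl

lemma middleSum_comm
    (hG : ∀ f₁ f₂ : G → ℂ, BiInvariantOn ⊤ H f₁ → BiInvariantOn ⊤ H f₂ →
      convOn ⊤ f₁ f₂ = convOn ⊤ f₂ f₁)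
    {u : G → ℂ} (hu : BiInvariantOn ⊤ H u) (x y : G) :
    middleSum H x (middleSum H y u) = middleSum H y (middleSum H x u) := by
  have hconv (a b : G) :
      convOn ⊤ (doubleCosetKernel H a⁻¹) (convOn ⊤ (doubleCosetKernel H b⁻¹) u) =
        (Nat.card H : ℂ) • (Nat.card H : ℂ) • middleSum H a (middleSum H b u) := by
    rw [convOn_doubleCosetKernel hu, convOn_smul_right,
      convOn_doubleCosetKernel (hu.middleSum b)]
  have hcard : (Nat.card H : ℂ) ≠ 0 := Nat.cast_ne_zero.mpr Nat.card_pos.ne'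
  refine smul_right_injective _ hcard (smul_right_injective _ hcard ?_)
  simp only [← hconv, convOn_top_assoc]
  rw [hG _ _ (biInvariantOn_doubleCosetKernel _) (biInvariantOn_doubleCosetKernel _)]

end MiddleSum

section Spherical

variable {G : Type*} [Group G] [Fintype G] {H K : Subgroup G}

lemma IsZonalSpherical.apply_one {ω : G → ℂ} (hω : IsZonalSpherical K H ω) : ω 1 = 1 := by
  obtain ⟨⟨g, hgK, hg⟩, hbi, hfun⟩ := hω
  have hsum : ∑ h : H, ω (g * h * 1) = Nat.card H * ω g := by
    simp [hbi.apply_mul_right _ hgK]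
  have := hfun g hgK 1 K.one_mem
  rw [hsum, ← mul_assoc, one_div_mul_cancel (Nat.cast_ne_zero.mpr Nat.card_pos.ne'),
    one_mul] at this
  exact (mul_eq_left₀ hg).mp this.symm

lemma IsZonalSpherical.of_le {L : Subgroup G} (hKL : K ≤ L) {ω : G → ℂ}
    (hω : IsZonalSpherical L H ω) : IsZonalSpherical K H ω :=
  ⟨⟨1, K.one_mem, by simp [hω.apply_one]⟩,
    fun h₁ hh₁ g hg h₂ hh₂ => hω.2.1 h₁ hh₁ g (hKL hg) h₂ hh₂,
    fun g hg k hk => hω.2.2 g (hKL hg) k (hKL hk)⟩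

lemma isZonalSpherical_of_forall_eigen {v : G → ℂ} (hv : BiInvariantOn ⊤ H v) (hv0 : v ≠ 0)
    (heig : ∀ x, ∃ c : ℂ, middleSum H x v = c • v) :
    v 1 ≠ 0 ∧ IsZonalSpherical ⊤ H ((v 1)⁻¹ • v) := by
  choose c hc using heig
  have hcard : (Nat.card H : ℂ) ≠ 0 := Nat.cast_ne_zero.mpr Nat.card_pos.ne'
  have hcv (x : G) : Nat.card H * v x = c x * v 1 := by
    rw [← middleSum_apply_one hv, hc]; rfl
  have hv1 : v 1 ≠ 0 := fun h0 => hv0 (funext fun x => by simpa [h0, hcard] using hcv x)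
  refine ⟨hv1, ⟨1, Subgroup.mem_top 1, by simp [hv1]⟩, hv.smul _, fun g _ k _ => ?_⟩
  have hgk := congrFun (hc g) k
  simp only [middleSum_apply, Pi.smul_apply, smul_eq_mul] at hgk ⊢
  rw [← Finset.mul_sum, hgk]
  field_simp
  linear_combination -v k * hcv g

noncomputable def biInvariantEigenspace (H K : Subgroup G) (Ω : G → ℂ) :
    Submodule ℂ (G → ℂ) :=
  biInvariantSubmodule H ⊓ ⨅ x : K, (middleSum H x).eigenspace (Nat.card H * Ω x)

lemma mem_biInvariantEigenspace {Ω u : G → ℂ} :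
    u ∈ biInvariantEigenspace H K Ω ↔
      BiInvariantOn ⊤ H u ∧ ∀ x ∈ K, middleSum H x u = (Nat.card H * Ω x) • u := by
  simp only [biInvariantEigenspace, Submodule.mem_inf, Submodule.mem_iInf,
    Module.End.mem_eigenspace_iff, Subtype.forall, mem_biInvariantSubmodule]

lemma middleSum_mem_biInvariantEigenspace
    (hG : ∀ f₁ f₂ : G → ℂ, BiInvariantOn ⊤ H f₁ → BiInvariantOn ⊤ H f₂ →
      convOn ⊤ f₁ f₂ = convOn ⊤ f₂ f₁)
    {Ω u : G → ℂ} (hu : u ∈ biInvariantEigenspace H K Ω) (g : G) :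
    middleSum H g u ∈ biInvariantEigenspace H K Ω := by
  rw [mem_biInvariantEigenspace] at hu ⊢
  refine ⟨hu.1.middleSum g, fun x hx => ?_⟩
  rw [middleSum_comm hG hu.1, hu.2 x hx, map_smul]

lemma IsZonalSpherical.indicator_mem_biInvariantEigenspace (hHK : H ≤ K) {Ω : G → ℂ}
    (hΩ : IsZonalSpherical K H Ω) :
    (K : Set G).indicator Ω ∈ biInvariantEigenspace H K Ω := by
  refine mem_biInvariantEigenspace.mpr ⟨hΩ.2.1.indicator hHK, fun x hx => funext fun y => ?_⟩
  have hmem (h : H) : x * h * y ∈ K ↔ y ∈ K := by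
    rw [K.mul_mem_cancel_left (K.mul_mem hx (hHK h.2))]
  by_cases hy : y ∈ K
  · have hfun := hΩ.2.2 x hx y hy
    rw [one_div, inv_mul_eq_iff_eq_mul₀ (Nat.cast_ne_zero.mpr Nat.card_pos.ne')] at hfun
    rw [middleSum_apply, Pi.smul_apply, Set.indicator_of_mem hy, smul_eq_mul, mul_assoc, ← hfun]
    exact Finset.sum_congr rfl fun h _ => Set.indicator_of_mem ((hmem h).mpr hy) Ω
  · simp [Set.indicator_of_notMem, hy, mt (hmem _).mp hy]

theorem IsZonalSpherical.exists_extension (hHK : H ≤ K)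
    (hG : ∀ f₁ f₂ : G → ℂ, BiInvariantOn ⊤ H f₁ → BiInvariantOn ⊤ H f₂ →
      convOn ⊤ f₁ f₂ = convOn ⊤ f₂ f₁)
    {Ω : G → ℂ} (hΩ : IsZonalSpherical K H Ω) :
    ∃ ω : G → ℂ, IsZonalSpherical ⊤ H ω ∧ ∀ x ∈ K, ω x = Ω x := by
  have hne : biInvariantEigenspace H K Ω ≠ ⊥ := by
    obtain ⟨g, hgK, hg⟩ := hΩ.1
    refine (Submodule.ne_bot_iff _).mpr ⟨_, hΩ.indicator_mem_biInvariantEigenspace hHK, ?_⟩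
    exact fun h0 => hg (by simpa [hgK] using congrFun h0 g)
  obtain ⟨v, hv, hv0, heig⟩ := Module.End.exists_common_eigenvector Finset.univ (middleSum H) hne
    (fun g _ _ hu => middleSum_mem_biInvariantEigenspace hG hu g)
    (fun g _ g' _ _ hu => middleSum_comm hG (mem_biInvariantEigenspace.mp hu).1 g g')
  rw [mem_biInvariantEigenspace] at hv
  obtain ⟨hv1, hω⟩ := isZonalSpherical_of_forall_eigen hv.1 hv0 fun x => heig x (Finset.mem_univ x)
  refine ⟨(v 1)⁻¹ • v, hω, fun x hx => ?_⟩
  have hx1 := congrFun (hv.2 x hx) 1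
  rw [middleSum_apply_one hv.1, Pi.smul_apply, smul_eq_mul, mul_assoc] at hx1
  rw [Pi.smul_apply, smul_eq_mul, mul_left_cancel₀ (Nat.cast_ne_zero.mpr Nat.card_pos.ne') hx1]
  field_simp

end Spherical

theorem spherical_restriction_general {G : Type*} [Group G] [Fintype G] (H K : Subgroup G)
    (hHK : H ≤ K)
    (hG : ∀ f₁ f₂ : G → ℂ, BiInvariantOn ⊤ H f₁ → BiInvariantOn ⊤ H f₂ →
      convOn ⊤ f₁ f₂ = convOn ⊤ f₂ f₁) :
    (∀ ω : G → ℂ, IsZonalSpherical ⊤ H ω → IsZonalSpherical K H ω) ∧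
      (∀ Ω : G → ℂ, IsZonalSpherical K H Ω →
        ∃ ω : G → ℂ, IsZonalSpherical ⊤ H ω ∧ ∀ x ∈ K, ω x = Ω x) :=
  ⟨fun _ hω => hω.of_le le_top, fun _ hΩ => hΩ.exists_extension hHK hG⟩

/-- Let `(G,H)` be a finite Gelfand pair, `ω` a zonal spherical function
of `(G,H)`, and `K` a subgroup with `H ⊆ K ⊆ G` such that `(K,H)` is also a Gelfand pair.
Then `ω|_K` is a zonal spherical function of `(K,H)`; moreover every zonal spherical
function of `(K,H)` is such a restriction. -/
theorem spherical_restriction {G : Type*} [Group G] [Fintype G] (H K : Subgroup G)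
    (hHK : H ≤ K)
    (hG : ∀ f₁ f₂ : G → ℂ, BiInvariantOn ⊤ H f₁ → BiInvariantOn ⊤ H f₂ →
      convOn ⊤ f₁ f₂ = convOn ⊤ f₂ f₁)
    (hK : ∀ f₁ f₂ : G → ℂ, BiInvariantOn K H f₁ → BiInvariantOn K H f₂ →
      ∀ x ∈ K, convOn K f₁ f₂ x = convOn K f₂ f₁ x) :
    (∀ ω : G → ℂ, IsZonalSpherical ⊤ H ω → IsZonalSpherical K H ω) ∧
      (∀ Ω : G → ℂ, IsZonalSpherical K H Ω →
        ∃ ω : G → ℂ, IsZonalSpherical ⊤ H ω ∧ ∀ x ∈ K, ω x = Ω x) :=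
  spherical_restriction_general H K hHK hG
end

section
/- A complete set of representatives for the double cosets S_n \ G(r,d,n) / S_n is given by the elements (1,...,1, ξ,...,ξ, ..., ξ^{r-1},...,ξ^{r-1}, id) with multiplicities l_0, l_1, ..., l_{r-1}, where Σ_i l_i = n and Σ_i i·l_i ≡ 0 (mod d). In particular, distinct such r-tuples (l_0, ..., l_{r-1}) give distinct double cosets. -/
open SemidirectProduct

open scoped Classical

/-- The count vector of an element of the wreath product: `counts g i` is the number of
coordinates of `g` equal to `ξ^i`. -/
def counts (r n : ℕ) (g : Gr1n r n) : ZMod r → ℕ := fun i =>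
  (Finset.univ.filter (fun j => Multiplicative.toAdd (g.left j) = i)).card

/-! Left multiplication by `σ ∈ S_n` permutes the coordinates of an element of `G(r,1,n)` and
right multiplication leaves them untouched, so two elements lie in the same double coset exactly
when their coordinate functions differ by a permutation, i.e. have the same count vector. Every
count vector `l` with `Σ l_i = n` is realised by a diagonal element `(ξ^{f 1}, …, ξ^{f n}, id)`,
and it lies in `G(r,d,n)` because `Φ` only sees `Σ i · l_i mod d`. -/

section Fibers

variable {α β : Type*} [Fintype α] [DecidableEq β]

theorem exists_perm_comp_eq_iff_card_fiber_eq {f g : α → β} :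
    (∃ σ : Equiv.Perm α, f ∘ σ = g) ↔
      ∀ b, Fintype.card {a // f a = b} = Fintype.card {a // g a = b} := by
  constructor
  · rintro ⟨σ, rfl⟩ b
    exact (Fintype.card_congr (σ.subtypeEquiv fun _ => Iff.rfl)).symm
  · intro hfg
    let σ : Equiv.Perm α := Equiv.ofFiberEquiv fun b => Fintype.equivOfCardEq (hfg b).symm
    exact ⟨σ, funext (Equiv.ofFiberEquiv_map _)⟩

theorem exists_card_fiber_eq [Fintype β] (l : β → ℕ) (hl : ∑ b, l b = Fintype.card α) :
    ∃ f : α → β, ∀ b, Fintype.card {a // f a = b} = l b := by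
  let e : α ≃ Σ b, Fin (l b) := Fintype.equivOfCardEq (by simp [hl])
  refine ⟨fun a => (e a).1, fun b => ?_⟩
  rw [Fintype.card_congr ((e.subtypeEquiv fun _ => Iff.rfl).trans (Equiv.sigmaSubtype b)),
    Fintype.card_fin]

theorem sum_eq_sum_card_fiber_nsmul [AddCommMonoid β] [Fintype β] (f : α → β) :
    ∑ a, f a = ∑ b, Fintype.card {a // f a = b} • b := by
  rw [← Fintype.sum_fiberwise' f fun b => b]
  simp

end Fibers

variable {r n : ℕ}

theorem counts_eq_card_fiber (g : Gr1n r n) (i : ZMod r) :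
    counts r n g i = Fintype.card {j // Multiplicative.toAdd (g.left j) = i} := by
  rw [counts, Fintype.card_subtype]

theorem counts_eq_counts_iff (g₁ g₂ : Gr1n r n) :
    counts r n g₁ = counts r n g₂ ↔ ∃ σ : Equiv.Perm (Fin n), g₁.left ∘ σ = g₂.left := by
  rw [funext_iff]
  simp only [counts_eq_card_fiber]
  rw [← exists_perm_comp_eq_iff_card_fiber_eq]
  simp only [Function.comp_def, ← Multiplicative.toAdd.injective.comp_left.eq_iff]

theorem left_inr_mul_mul_inr (σ τ : Equiv.Perm (Fin n)) (g : Gr1n r n) :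
    (inr σ * g * inr τ).left = g.left ∘ σ.symm := by
  ext j
  simp only [mul_left, mul_right, left_inr, right_inr]
  simp [wreathAut]

theorem exists_snSub_mul_mul_eq_iff (g₁ g₂ : Gr1n r n) :
    (∃ h₁ ∈ SnSub r n, ∃ h₂ ∈ SnSub r n, g₂ = h₁ * g₁ * h₂) ↔
      ∃ σ : Equiv.Perm (Fin n), g₁.left ∘ σ = g₂.left := by
  constructor
  · rintro ⟨_, ⟨σ, rfl⟩, _, ⟨τ, rfl⟩, rfl⟩
    exact ⟨σ.symm, (left_inr_mul_mul_inr σ τ g₁).symm⟩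
  · rintro ⟨σ, hσ⟩
    refine ⟨inr σ⁻¹, ⟨σ⁻¹, rfl⟩, inr (g₁.right⁻¹ * σ * g₂.right), ⟨_, rfl⟩, ?_⟩
    ext1
    · rw [left_inr_mul_mul_inr, ← hσ]
      rfl
    · simp only [mul_right, right_inr]
      group

theorem mem_ker_phiHom_iff [NeZero r] {d : ℕ} (h : d ∣ r) (g : Gr1n r n) :
    g ∈ (PhiHom r d n h).ker ↔ (∑ i : ZMod r, i.val * counts r n g i) % d = 0 := by
  have hcast : ZMod.castHom h (ZMod d) (∑ j, Multiplicative.toAdd (g.left j))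
      = ((∑ i : ZMod r, i.val * counts r n g i : ℕ) : ZMod d) := by
    simp only [sum_eq_sum_card_fiber_nsmul fun j => Multiplicative.toAdd (g.left j),
      ← counts_eq_card_fiber, map_sum, map_nsmul, ZMod.castHom_apply]
    push_cast
    refine Finset.sum_congr rfl fun i _ => ?_
    rw [← ZMod.natCast_val, nsmul_eq_mul, mul_comm]
  rw [MonoidHom.mem_ker, ← Nat.dvd_iff_mod_eq_zero, ← ZMod.natCast_eq_zero_iff, ← hcast]
  rfl

theorem counts_inl (f : Fin n → ZMod r) :
    counts r n (inl (φ := wreathAut r n) (Multiplicative.ofAdd ∘ f)) =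
      fun i => Fintype.card {j // f j = i} :=
  funext fun i => counts_eq_card_fiber _ i

/-- A complete set of representatives of the double cosets
`S_n \ G(r,d,n) / S_n` is given by the elements `(1,…,1,ξ,…,ξ,…,ξ^{r-1},…,ξ^{r-1}, id)`
with multiplicities `l_0, …, l_{r-1}` satisfying `Σ l_i = n` and `Σ i·l_i ≡ 0 (mod d)`:
two elements of `G(r,d,n)` lie in the same double coset iff they have the same count
vector (so distinct tuples give distinct double cosets), and every such tuple `l` is the
count vector of an element of `G(r,d,n)` of the form `(ξ_1, …, ξ_n, id)`. -/
theorem Grdn_double_coset_representatives (r d n : ℕ) [NeZero r] (h : d ∣ r) :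
    (∀ g₁ ∈ (PhiHom r d n h).ker, ∀ g₂ ∈ (PhiHom r d n h).ker,
      ((∃ h₁ ∈ SnSub r n, ∃ h₂ ∈ SnSub r n, g₂ = h₁ * g₁ * h₂) ↔
        counts r n g₁ = counts r n g₂)) ∧
    (∀ l : ZMod r → ℕ, (∑ i, l i) = n → (∑ i : ZMod r, i.val * l i) % d = 0 →
      ∃ g ∈ (PhiHom r d n h).ker, g.right = 1 ∧ counts r n g = l) := by
  refine ⟨fun g₁ _ g₂ _ => ?_, fun l hsum hmod => ?_⟩
  · exact (exists_snSub_mul_mul_eq_iff g₁ g₂).trans (counts_eq_counts_iff g₁ g₂).symm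
  · obtain ⟨f, hf⟩ := exists_card_fiber_eq l (hsum.trans (Fintype.card_fin n).symm)
    have hcounts : counts r n (inl (Multiplicative.ofAdd ∘ f)) = l := by
      rw [counts_inl]
      exact funext hf
    exact ⟨_, (mem_ker_phiHom_iff h _).2 (hcounts ▸ hmod), right_inl _, hcounts⟩
end

section
/- Let σ ∈ S_n be a permutation with n_σ disjoint cycles of lengths l_1, ..., l_{n_σ} (including fixed points as cycles of length 1), let d | r, p = r/d, and k = gcd(d, l_1, ..., l_{n_σ}). Then the number of n-tuples (a_1, ..., a_n) ∈ (Z/rZ)^n such that a_i is constant on each cycle of σ and a_1 + ... + a_n ≡ 0 (mod d) equals k · p · r^{n_σ - 1}. -/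
/-!
A tuple that is constant on the cycles of `σ` is the same as a function `b` on the set `C`
of cycles, and its coordinate sum is `∑ c, l c • b c`. Reduced mod `d`, `b ↦ ∑ c, l c • b c`
is a homomorphism `(ℤ/rℤ)^C → ℤ/dℤ` whose image is, by Bézout, the subgroup generated by
`g = gcd (l c)`, of order `d / gcd d g`. The count is the order of the kernel,
`r ^ |C| * gcd d g / d`.
-/

open Finset

theorem Int.natCast_finset_gcd {ι : Type*} (s : Finset ι) (f : ι → ℕ) :
    ((s.gcd f : ℕ) : ℤ) = s.gcd fun i => (f i : ℤ) := by
  classical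
  induction s using Finset.induction_on with
  | empty => simp
  | insert a s ha ih =>
    rw [gcd_insert, gcd_insert, ← ih, ← Int.coe_gcd, Int.gcd_natCast_natCast]
    rfl

namespace ZMod

variable {ι : Type*} [Fintype ι] {r d : ℕ} (hdr : d ∣ r) (w : ι → ℕ)

def weightedSumMod : (ι → ZMod r) →+ ZMod d where
  toFun b := ∑ i, w i • castHom hdr (ZMod d) (b i)
  map_zero' := by simp
  map_add' b c := by simp only [Pi.add_apply, map_add, smul_add, sum_add_distrib]

theorem weightedSumMod_apply (b : ι → ZMod r) :
    weightedSumMod hdr w b = ∑ i, w i • castHom hdr (ZMod d) (b i) := rfl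

theorem range_weightedSumMod :
    (weightedSumMod hdr w).range = AddSubgroup.zmultiples ((univ.gcd w : ℕ) : ZMod d) := by
  apply le_antisymm
  · rintro _ ⟨b, rfl⟩
    refine AddSubgroup.sum_mem _ fun i _ => ?_
    obtain ⟨t, ht⟩ := gcd_dvd (mem_univ i) (f := w)
    set x := castHom hdr (ZMod d) (b i)
    refine ⟨t * (x.cast : ℤ), ?_⟩
    dsimp only
    rw [ht, zsmul_eq_mul, nsmul_eq_mul]
    push_cast [intCast_zmod_cast]
    ring
  · obtain ⟨c, hc⟩ := gcd_eq_sum_mul univ fun i => (w i : ℤ)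
    rw [AddSubgroup.zmultiples_le]
    refine ⟨fun i => c i, ?_⟩
    rw [weightedSumMod_apply, ← Int.cast_natCast, Int.natCast_finset_gcd, hc]
    simp [nsmul_eq_mul]

theorem card_ker_weightedSumMod [Nonempty ι] (hd : d ≠ 0) :
    Nat.card (weightedSumMod hdr w).ker
      = d.gcd (univ.gcd w) * (r / d) * r ^ (Fintype.card ι - 1) := by
  have hlagrange := (weightedSumMod hdr w).ker.card_mul_index
  rw [AddSubgroup.index_ker, range_weightedSumMod, Nat.card_zmultiples, addOrderOf_coe _ hd,
    Nat.card_fun, Nat.card_zmod, Nat.card_eq_fintype_card (α := ι)] at hlagrange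
  set k := d.gcd (univ.gcd w)
  have hkd : k ∣ d := Nat.gcd_dvd_left _ _
  have hdk : 0 < d / k := Nat.div_pos (Nat.le_of_dvd (Nat.pos_of_ne_zero hd) hkd)
    (Nat.pos_of_dvd_of_pos hkd (Nat.pos_of_ne_zero hd))
  refine Nat.eq_of_mul_eq_mul_right hdk (hlagrange.trans ?_)
  obtain ⟨m, hm⟩ := Nat.exists_eq_succ_of_ne_zero (Fintype.card_ne_zero (α := ι))
  calc r ^ Fintype.card ι = (d / k * k) * (r / d) * r ^ m := by
        rw [Nat.div_mul_cancel hkd, Nat.mul_div_cancel' hdr, hm, pow_succ']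
    _ = _ := by rw [hm, Nat.succ_sub_one]; ring

end ZMod

namespace Equiv.Perm

variable {α : Type*} (σ : Perm α)

theorem apply_zpow_apply_of_forall_apply_eq {β : Type*} {a : α → β}
    (ha : ∀ x, a (σ x) = a x) (k : ℤ) (x : α) : a ((σ ^ k) x) = a x := by
  induction k using Int.induction_on generalizing x with
  | zero => rfl
  | succ k ih => rw [zpow_add_one, mul_apply, ih, ha]
  | pred k ih =>
    rw [zpow_sub_one, mul_apply, ih, ← ha, ← mul_apply, mul_inv_cancel, one_apply]

theorem SameCycle.apply_eq_of_forall_apply_eq {β : Type*} {a : α → β}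
    (ha : ∀ x, a (σ x) = a x) {x y : α} (h : σ.SameCycle x y) : a x = a y := by
  obtain ⟨k, rfl⟩ := h
  exact (apply_zpow_apply_of_forall_apply_eq σ ha k x).symm

/-- The cycles of `σ`, fixed points included as cycles of length one. -/
abbrev Cycles : Type _ := Quotient (SameCycle.setoid σ)

def invariantFunEquiv (β : Type*) :
    {a : α → β // ∀ x, a (σ x) = a x} ≃ (σ.Cycles → β) where
  toFun a := Quotient.lift a.1 fun _ _ => SameCycle.apply_eq_of_forall_apply_eq σ a.2
  invFun b := ⟨fun x => b ⟦x⟧, fun _ =>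
    congrArg b (Quotient.sound (sameCycle_apply_left.2 (SameCycle.refl _ _)))⟩
  left_inv _ := rfl
  right_inv _ := funext (Quotient.ind fun _ => rfl)

variable [Fintype α] [DecidableEq α]

instance : DecidableRel (SameCycle.setoid σ).r :=
  fun x y => inferInstanceAs (Decidable (σ.SameCycle x y))

def cycleSize (q : σ.Cycles) : ℕ := #{x | ⟦x⟧ = q}

theorem sum_comp_mk {M : Type*} [AddCommMonoid M] (b : σ.Cycles → M) :
    ∑ x, b ⟦x⟧ = ∑ q, σ.cycleSize q • b q := by
  rw [Finset.sum_comp, image_univ_of_surjective Quotient.mk_surjective]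
  rfl

theorem sum_cycleSize : ∑ q, σ.cycleSize q = Fintype.card α := by
  simpa only [nsmul_one, Nat.cast_id, sum_const, card_univ] using
    (sum_comp_mk σ fun _ => (1 : ℕ)).symm

theorem cycleSize_mk_of_mem_support {x : α} (hx : x ∈ σ.support) :
    σ.cycleSize ⟦x⟧ = #(σ.cycleOf x).support := by
  rw [cycleSize]
  congr 1
  ext y
  rw [mem_filter, mem_support_cycleOf_iff, Quotient.eq]
  exact ⟨fun h => ⟨h.2.symm, hx⟩, fun h => ⟨mem_univ _, h.1.symm⟩⟩

theorem cycleSize_mk_of_notMem_support {x : α} (hx : x ∉ σ.support) :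
    σ.cycleSize ⟦x⟧ = 1 := by
  rw [cycleSize, card_eq_one]
  refine ⟨x, Finset.ext fun y => ?_⟩
  rw [mem_filter, mem_singleton, Quotient.eq]
  exact ⟨fun h => h.2.eq_of_right (notMem_support.1 hx),
    fun h => h ▸ ⟨mem_univ _, .refl _ _⟩⟩

theorem map_cycleSize_filter_out_mem_support :
    (univ.filter fun q : σ.Cycles => q.out ∈ σ.support).val.map σ.cycleSize
      = σ.cycleType := by
  set A := univ.filter fun q : σ.Cycles => q.out ∈ σ.support
  have hinj : Set.InjOn (fun q : σ.Cycles => σ.cycleOf q.out) A := fun q₁ h₁ q₂ h₂ h =>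
    Quotient.out_equiv_out.1 <|
      (sameCycle_iff_cycleOf_eq_of_mem_support (mem_filter.1 h₁).2 (mem_filter.1 h₂).2).2 h
  have himage : A.image (fun q => σ.cycleOf q.out) = σ.cycleFactorsFinset := by
    ext c
    simp only [A, mem_image, mem_filter, mem_univ, true_and]
    constructor
    · rintro ⟨q, hq, rfl⟩
      exact cycleOf_mem_cycleFactorsFinset_iff.2 hq
    · intro hc
      obtain ⟨x, hx⟩ := (mem_cycleFactorsFinset_iff.1 hc).1.nonempty_support
      have hxq : σ.SameCycle (⟦x⟧ : σ.Cycles).out x :=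
        Quotient.mk_out (s := SameCycle.setoid σ) x
      refine ⟨⟦x⟧, hxq.mem_support_iff.2 (mem_cycleFactorsFinset_support_le hc hx), ?_⟩
      rw [hxq.cycleOf_eq, ← cycle_is_cycleOf hx hc]
  rw [cycleType_def, ← himage, image_val_of_injOn hinj, Multiset.map_map]
  refine Multiset.map_congr rfl fun q hq => ?_
  conv_lhs => rw [← Quotient.out_eq q]
  exact cycleSize_mk_of_mem_support σ (mem_filter.1 hq).2

theorem map_cycleSize_univ : univ.val.map σ.cycleSize = σ.partition.parts := by
  set B := (univ.val.filter fun q : σ.Cycles => q.out ∉ σ.support).map σ.cycleSize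
  have hB : B = Multiset.replicate (Multiset.card B) 1 :=
    Multiset.eq_replicate_card.2 fun _ hb => by
      obtain ⟨q, hq, rfl⟩ := Multiset.mem_map.1 hb
      rw [← Quotient.out_eq q, cycleSize_mk_of_notMem_support σ (Multiset.mem_filter.1 hq).2]
  have hsplit : univ.val.map σ.cycleSize = σ.cycleType + B := by
    rw [← map_cycleSize_filter_out_mem_support, filter_val, ← Multiset.map_add,
      Multiset.filter_add_not]
  -- the cycles through fixed points all have size 1; their number comes from `sum_cycleSize`
  have hcard : Multiset.card B = Fintype.card α - #σ.support := by
    have hsum := congrArg Multiset.sum hsplit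
    rw [← sum_eq_multiset_sum, sum_cycleSize, Multiset.sum_add, sum_cycleType, hB,
      Multiset.sum_replicate, smul_eq_mul, mul_one] at hsum
    omega
  rw [parts_partition, hsplit, hB, hcard]

theorem card_invariant_fun_castHom_sum_eq_zero {r d : ℕ} (hdr : d ∣ r) :
    Nat.card {a : α → ZMod r //
        (∀ i, a (σ i) = a i) ∧ ZMod.castHom hdr (ZMod d) (∑ i, a i) = 0}
      = Nat.card (ZMod.weightedSumMod hdr σ.cycleSize).ker := by
  refine Nat.card_congr <| (Equiv.subtypeSubtypeEquivSubtypeInter _ _).symm.trans <|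
    Equiv.subtypeEquiv (invariantFunEquiv σ _) fun a => ?_
  rw [AddMonoidHom.mem_ker, ZMod.weightedSumMod_apply, ← sum_comp_mk, ← map_sum]
  rfl

end Equiv.Perm

theorem count_cycle_constant_tuples_general (r d n : ℕ) (hdr : d ∣ r) (hd : 0 < d)
    (hn : 0 < n) (σ : Equiv.Perm (Fin n)) :
    Nat.card {a : Fin n → ZMod r //
        (∀ i, a (σ i) = a i) ∧ ZMod.castHom hdr (ZMod d) (∑ i, a i) = 0}
      = Nat.gcd d (σ.cycleType + Multiset.replicate (n - σ.support.card) 1).gcd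
          * (r / d)
          * r ^ (Multiset.card (σ.cycleType + Multiset.replicate (n - σ.support.card) 1) - 1)
    := by
  have hL : σ.cycleType + Multiset.replicate (n - #σ.support) 1 = univ.val.map σ.cycleSize := by
    rw [σ.map_cycleSize_univ, Equiv.Perm.parts_partition, Fintype.card_fin]
  have : Nonempty σ.Cycles := ⟨⟦⟨0, hn⟩⟧⟩
  rw [hL, ← gcd_def, Multiset.card_map, card_val, card_univ,
    ← ZMod.card_ker_weightedSumMod hdr _ hd.ne']
  exact σ.card_invariant_fun_castHom_sum_eq_zero hdr

/-- Let `σ ∈ S_n` have `n_σ` disjoint cycles of lengths `l_1, …, l_{n_σ}`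
(including fixed points as cycles of length `1`; these lengths form the multiset `L` below),
let `d ∣ r`, `p = r/d`, and `k = gcd(d, l_1, …, l_{n_σ})`. Then the number of `n`-tuples
`a ∈ (ℤ/rℤ)^n` that are constant on each cycle of `σ` and satisfy
`a_1 + ⋯ + a_n ≡ 0 (mod d)` is `k · p · r^(n_σ - 1)`. -/
theorem count_cycle_constant_tuples (r d n : ℕ) (hdr : d ∣ r) (hr : 0 < r) (hd : 0 < d)
    (hn : 0 < n) (σ : Equiv.Perm (Fin n)) :
    Nat.card {a : Fin n → ZMod r //
        (∀ i, a (σ i) = a i) ∧ ZMod.castHom hdr (ZMod d) (∑ i, a i) = 0}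
      = Nat.gcd d (σ.cycleType + Multiset.replicate (n - σ.support.card) 1).gcd
          * (r / d)
          * r ^ (Multiset.card (σ.cycleType + Multiset.replicate (n - σ.support.card) 1) - 1) :=
  count_cycle_constant_tuples_general r d n hdr hd hn σ
end

section
/- With H = S_n, K = G(r,d,n), G = G(r,1,n), and Q = {(μ,...,μ,id) : μ ∈ C_d} the diagonal subgroup (so G/K ≅ C_d and Q·H ≅ C_d × S_n), the number of double cosets |H \ K / H| equals the number of double cosets |H \ G / (Q·H)|. -/
open SemidirectProduct

/-- The diagonal embedding `C_r → G(r,1,n)`, `μ ↦ (μ, …, μ, id)`. -/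
def diagHom (r n : ℕ) : Multiplicative (ZMod r) →* Gr1n r n where
  toFun μ := ⟨fun _ => μ, 1⟩
  map_one' := rfl
  map_mul' μ ν := by
    refine SemidirectProduct.ext ?_ (by simp)
    funext i
    simp [SemidirectProduct.mul_left, wreathAut]
    rfl

/-- The subgroup `Q = {(μ,…,μ,id) : μ ∈ C_d}` of `G(r,1,n)`, where
`C_d = {ν^(r/d) : ν ∈ C_r}` is the subgroup of `d`-th roots of unity in `C_r`. -/
def Qdiag (r d n : ℕ) : Subgroup (Gr1n r n) :=
  ((diagHom r n).comp (powMonoidHom (r / d))).range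

/-!
Write `A = (ZMod r)ⁿ` for the coordinates of `C_rⁿ` and `C_d ≤ ZMod r` for the multiples of
`r / d`. Double cosets `H \ K / H` are the `Sₙ`-orbits on `B = {b ∈ A | C_d · ∑ b = 0}`, and
double cosets `H \ G / QH` are the orbits of `Sₙ × C_d` on `A`, with `C_d` translating by
constant vectors. By Burnside's lemma it suffices to show `|C_d| · |B^σ| = #{(a, s) | σa + s = a}`
for each `σ`. The right side is the kernel of the displacement `(a, s) ↦ σa + s - a`. Under the
dot product, a perfect pairing on `A`, the orthogonal of its image is exactly `B^σ`, and
`|X^⊥| · |X| = |A|` for every subgroup `X`.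
-/

open Equiv MulAction

theorem MulAction.sum_natCard_fixedBy_eq_natCard_orbits_mul_natCard (G X : Type*) [Group G]
    [MulAction G X] [Fintype G] [Finite X] :
    ∑ g : G, Nat.card (fixedBy X g) = Nat.card (Quotient (orbitRel G X)) * Nat.card G := by
  rw [← Nat.card_sigma, Nat.card_congr (sigmaFixedByEquivOrbitsProdGroup G X), Nat.card_prod]

theorem Setoid.card_quotient_eq_of_surjective {α β : Type*} {s : Setoid α} {t : Setoid β}
    (f : α → β) (hf : Function.Surjective f) (hst : ∀ x y, s x y ↔ t (f x) (f y)) :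
    Nat.card (Quotient s) = Nat.card (Quotient t) := by
  obtain rfl : s = t.comap f := Setoid.ext hst
  rw [Nat.card_congr (Setoid.comapQuotientEquiv f t),
    Set.range_eq_univ.mpr (Quotient.mk''_surjective.comp hf), Nat.card_univ]

theorem DoubleCoset.setoid_subgroupOf_iff {G : Type*} [Group G] {H K L : Subgroup G}
    (hH : H ≤ L) (hK : K ≤ L) {x y : L} :
    setoid (H.subgroupOf L : Set L) (K.subgroupOf L) x y ↔ setoid (H : Set G) K x y := by
  rw [rel_iff, rel_iff]
  constructor
  · rintro ⟨a, ha, b, hb, rfl⟩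
    exact ⟨a, ha, b, hb, rfl⟩
  · rintro ⟨a, ha, b, hb, h⟩
    exact ⟨⟨a, hH ha⟩, ha, ⟨b, hK hb⟩, hb, Subtype.ext h⟩

namespace SemidirectProduct

variable {N G : Type*} [Group N] [Group G] {φ : G →* MulAut N} {M : Subgroup N}

lemma mem_map_inl_sup_range_inr_iff (hM : ∀ g, ∀ m ∈ M, φ g m = m) {x : N ⋊[φ] G} :
    x ∈ M.map inl ⊔ (inr : G →* N ⋊[φ] G).range ↔ x.left ∈ M := by
  let L : Subgroup (N ⋊[φ] G) :=
    { carrier := {x | x.left ∈ M}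
      one_mem' := M.one_mem
      mul_mem' := fun {x y} hx hy => by
        simpa only [Set.mem_ofPred_eq, mul_left, hM _ _ hy] using M.mul_mem hx hy
      inv_mem' := fun {x} hx => by
        simpa only [Set.mem_ofPred_eq, inv_left, hM _ _ (M.inv_mem hx)] using M.inv_mem hx }
  refine ⟨fun hx => ?_, fun hx => ?_⟩
  · refine sup_le (c := L) ?_ ?_ hx
    · rintro _ ⟨m, hm, rfl⟩
      exact hm
    · rintro _ ⟨g, rfl⟩
      exact M.one_mem
  · rw [← inl_left_mul_inr_right x]
    exact mul_mem (Subgroup.mem_sup_left ⟨_, hx, rfl⟩) (Subgroup.mem_sup_right ⟨_, rfl⟩)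

theorem doubleCoset_setoid_range_inr_iff (hM : ∀ g, ∀ m ∈ M, φ g m = m) {x y : N ⋊[φ] G} :
    DoubleCoset.setoid ((inr : G →* N ⋊[φ] G).range : Set (N ⋊[φ] G))
        ((M.map inl ⊔ (inr : G →* N ⋊[φ] G).range : Subgroup (N ⋊[φ] G)) : Set (N ⋊[φ] G)) x y ↔
      ∃ g, ∃ m ∈ M, y.left = φ g x.left * m := by
  rw [DoubleCoset.rel_iff]
  constructor
  · rintro ⟨_, ⟨g, rfl⟩, l, hl, rfl⟩
    refine ⟨g, l.left, (mem_map_inl_sup_range_inr_iff hM).mp hl, ?_⟩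
    simp [hM _ _ ((mem_map_inl_sup_range_inr_iff hM).mp hl)]
  · rintro ⟨g, m, hm, hy⟩
    refine ⟨inr g, ⟨g, rfl⟩, ⟨m, (g * x.right)⁻¹ * y.right⟩,
      (mem_map_inl_sup_range_inr_iff hM).mpr hm, ?_⟩
    ext <;> simp [hy, hM _ _ hm, mul_assoc]

theorem doubleCoset_setoid_range_inr_range_inr_iff {x y : N ⋊[φ] G} :
    DoubleCoset.setoid ((inr : G →* N ⋊[φ] G).range : Set (N ⋊[φ] G))
        ((inr : G →* N ⋊[φ] G).range : Set (N ⋊[φ] G)) x y ↔ ∃ g, y.left = φ g x.left := by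
  have h := doubleCoset_setoid_range_inr_iff (M := ⊥) (φ := φ) (x := x) (y := y)
    fun _ _ hm => by rw [Subgroup.mem_bot.mp hm, map_one]
  rw [Subgroup.map_bot, bot_sup_eq] at h
  simpa only [Subgroup.mem_bot, exists_eq_left, mul_one] using h

end SemidirectProduct

namespace ZMod

variable {r d : ℕ}

lemma castHom_eq_zero_iff_nsmul_eq_zero [NeZero r] (h : d ∣ r) (y : ZMod r) :
    castHom h (ZMod d) y = 0 ↔ (r / d) • y = 0 := by
  have hd : 0 < d := Nat.pos_of_dvd_of_pos h (NeZero.pos r)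
  have hrd : 0 < r / d := Nat.div_pos (Nat.le_of_dvd (NeZero.pos r) h) hd
  rw [← natCast_zmod_val y, map_natCast, nsmul_eq_mul, ← Nat.cast_mul, natCast_eq_zero_iff,
    natCast_eq_zero_iff, ← Nat.mul_dvd_mul_iff_left hrd, Nat.div_mul_cancel h]

lemma forall_mem_range_nsmul_mul_eq_zero_iff (k : ℕ) (y : ZMod r) :
    (∀ s ∈ (nsmulAddMonoidHom k : ZMod r →+ ZMod r).range, s * y = 0) ↔ k • y = 0 := by
  refine ⟨fun hy => ?_, ?_⟩
  · simpa using hy (k • 1) ⟨1, rfl⟩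
  · rintro hy _ ⟨μ, rfl⟩
    rw [nsmulAddMonoidHom_apply, smul_mul_assoc, ← mul_smul_comm, hy, mul_zero]

end ZMod

namespace AddSubgroup

variable {ι R : Type*} [Fintype ι] [CommRing R]

def dotOrthogonal (X : AddSubgroup (ι → R)) : AddSubgroup (ι → R) where
  carrier := {b | ∀ x ∈ X, x ⬝ᵥ b = 0}
  zero_mem' _ _ := dotProduct_zero _
  add_mem' ha hb x hx := by simp [dotProduct_add, ha x hx, hb x hx]
  neg_mem' ha x hx := by rw [dotProduct_neg, ha x hx, neg_zero]

lemma mem_dotOrthogonal {X : AddSubgroup (ι → R)} {b : ι → R} :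
    b ∈ X.dotOrthogonal ↔ ∀ x ∈ X, x ⬝ᵥ b = 0 :=
  Iff.rfl

lemma mem_dotOrthogonal_range {M : Type*} [AddCommGroup M] {f : M →+ ι → R} {b : ι → R} :
    b ∈ f.range.dotOrthogonal ↔ ∀ m, f m ⬝ᵥ b = 0 :=
  ⟨fun h m => h _ ⟨m, rfl⟩, fun h _ ⟨m, hm⟩ => hm ▸ h m⟩

end AddSubgroup

namespace ZMod

variable {r : ℕ} [NeZero r]

lemma sum_stdAddChar_comp_eq_ite {A : Type*} [AddGroup A] [Fintype A] (f : A →+ ZMod r) :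
    ∑ a, stdAddChar (f a) = if f = 0 then (Fintype.card A : ℂ) else 0 := by
  classical
  have hχ : stdAddChar.compAddMonoidHom f = 0 ↔ f = 0 := by
    simp only [DFunLike.ext_iff, AddChar.compAddMonoidHom_apply,
      AddChar.zero_apply, AddMonoidHom.zero_apply]
    exact forall_congr' fun a => by
      rw [← (stdAddChar : AddChar (ZMod r) ℂ).map_zero_eq_one, injective_stdAddChar.eq_iff]
  simpa only [AddChar.compAddMonoidHom_apply, hχ] using
    AddChar.sum_eq_ite (stdAddChar.compAddMonoidHom f)

/-- Evaluate `∑ x ∈ X, ∑ b, stdAddChar (x ⬝ᵥ b)` in both orders by orthogonality of characters. -/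
theorem card_dotOrthogonal_mul_card {ι : Type*} [Fintype ι] (X : AddSubgroup (ι → ZMod r)) :
    Nat.card X.dotOrthogonal * Nat.card X = r ^ Fintype.card ι := by
  classical
  have hX (b : ι → ZMod r) : ∑ x : X, stdAddChar (x.1 ⬝ᵥ b)
      = if b ∈ X.dotOrthogonal then (Nat.card X : ℂ) else 0 := by
    have := sum_stdAddChar_comp_eq_ite (AddMonoidHom.mk' (fun x : X => x.1 ⬝ᵥ b)
      fun x y => add_dotProduct _ _ _)
    simp only [AddMonoidHom.mk'_apply, Nat.card_eq_fintype_card] at this ⊢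
    rw [this]
    congr 1
    simp [DFunLike.ext_iff, AddSubgroup.mem_dotOrthogonal]
  have hA (x : ι → ZMod r) : ∑ b, stdAddChar (x ⬝ᵥ b)
      = if x = 0 then (r ^ Fintype.card ι : ℂ) else 0 := by
    have := sum_stdAddChar_comp_eq_ite (AddMonoidHom.mk' (fun b => x ⬝ᵥ b) (dotProduct_add x))
    simp only [AddMonoidHom.mk'_apply, Fintype.card_fun, ZMod.card, Nat.cast_pow] at this
    rw [this]
    congr 1
    simp [DFunLike.ext_iff, dotProduct_eq_zero_iff]
  have : ((Nat.card X.dotOrthogonal * Nat.card X : ℕ) : ℂ) = (r ^ Fintype.card ι : ℕ) :=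
    calc _ = ∑ b, ∑ x : X, stdAddChar (x.1 ⬝ᵥ b) := by
            simp [hX, Finset.sum_ite, Nat.card_eq_fintype_card, Fintype.card_subtype]
      _ = ∑ x : X, ∑ b, stdAddChar (x.1 ⬝ᵥ b) := Finset.sum_comm
      _ = _ := by simp [hA]
  exact_mod_cast this

end ZMod

-- `(σ • a) i = a (σ⁻¹ i)`: the permutation of coordinates performed by `wreathAut`.
attribute [local instance] arrowAction

section PermShift

variable {ι R : Type*} [AddCommGroup R]

instance (S : AddSubgroup R) :
    MulAction (Perm ι × Multiplicative S) (ι → R) where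
  smul p a := p.1 • a + fun _ => (p.2.toAdd : R)
  one_smul a := by
    ext i
    change a ((1 : Perm ι)⁻¹ i) + ((0 : S) : R) = a i
    simp
  mul_smul p q a := by
    ext i
    change a ((p.1 * q.1)⁻¹ i) + ((p.2.toAdd + q.2.toAdd : S) : R)
      = a (q.1⁻¹ (p.1⁻¹ i)) + (q.2.toAdd : R) + (p.2.toAdd : R)
    rw [mul_inv_rev, Perm.mul_apply, AddSubgroup.coe_add, add_comm (p.2.toAdd : R), add_assoc]

lemma Equiv.Perm.prod_smul_apply (S : AddSubgroup R) (σ : Perm ι) (s : Multiplicative S)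
    (a : ι → R) (i : ι) : ((σ, s) • a) i = a (σ⁻¹ i) + (s.toAdd : R) :=
  rfl

end PermShift

namespace ZMod

variable {ι : Type*} [Fintype ι] {r : ℕ}

variable (ι) in
def sumAnnihilatedBy (S : AddSubgroup (ZMod r)) : SubMulAction (Perm ι) (ι → ZMod r) where
  carrier := {b | ∀ s ∈ S, s * ∑ i, b i = 0}
  smul_mem' σ b hb := by
    rwa [Set.mem_ofPred_eq, show ∑ i, (σ • b) i = ∑ i, b i from Equiv.sum_comp σ⁻¹ b]

lemma mem_sumAnnihilatedBy {S : AddSubgroup (ZMod r)} {b : ι → ZMod r} :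
    b ∈ sumAnnihilatedBy ι S ↔ ∀ s ∈ S, s * ∑ i, b i = 0 :=
  Iff.rfl

variable (S : AddSubgroup (ZMod r)) (σ : Perm ι)

def displacement : (ι → ZMod r) × S →+ (ι → ZMod r) :=
  AddMonoidHom.mk' (fun p => (σ, Multiplicative.ofAdd p.2) • p.1 - p.1) fun p q => by
    ext i
    simp only [Pi.add_apply, Pi.sub_apply, Perm.prod_smul_apply, Prod.fst_add, Prod.snd_add,
      toAdd_ofAdd, AddSubgroup.coe_add]
    abel

lemma mem_dotOrthogonal_range_displacement {b : ι → ZMod r} :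
    b ∈ (displacement S σ).range.dotOrthogonal ↔ σ • b = b ∧ b ∈ sumAnnihilatedBy ι S := by
  have hpair (a : ι → ZMod r) (s : S) : displacement S σ (a, s) ⬝ᵥ b
      = a ⬝ᵥ (σ⁻¹ • b - b) + s * ∑ i, b i := by
    change (a ∘ σ.symm + (fun _ => (s : ZMod r)) - a) ⬝ᵥ b = _
    rw [sub_dotProduct, add_dotProduct, comp_equiv_symm_dotProduct, dotProduct_sub,
      Finset.mul_sum, add_sub_right_comm]
    rfl
  simp only [AddSubgroup.mem_dotOrthogonal_range, Prod.forall, hpair, mem_sumAnnihilatedBy]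
  constructor
  · intro h
    refine ⟨?_, fun s hs => by simpa using h 0 ⟨s, hs⟩⟩
    rw [eq_comm, ← inv_smul_eq_iff, ← sub_eq_zero, ← dotProduct_eq_zero_iff]
    intro a
    simpa [dotProduct_comm] using h a 0
  · rintro ⟨hσ, hS⟩ a s
    rw [inv_smul_eq_iff.mpr hσ.symm, sub_self, dotProduct_zero, zero_add, hS s s.2]

theorem card_mul_card_fixedBy_sumAnnihilatedBy [NeZero r] :
    Nat.card S * Nat.card (fixedBy (sumAnnihilatedBy ι S) σ)
      = Nat.card (Σ s : Multiplicative S, fixedBy (ι → ZMod r) (σ, s)) := by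
  set F := displacement S σ
  have hker : Nat.card (Σ s : Multiplicative S, fixedBy (ι → ZMod r) (σ, s)) = Nat.card F.ker :=
    Nat.card_congr
      { toFun := fun x => ⟨(x.2.1, x.1.toAdd), sub_eq_zero.mpr x.2.2⟩
        invFun := fun p => ⟨Multiplicative.ofAdd p.1.2, p.1.1, sub_eq_zero.mp p.2⟩ }
  have hfix : Nat.card (fixedBy (sumAnnihilatedBy ι S) σ) = Nat.card F.range.dotOrthogonal :=
    Nat.card_congr
      { toFun := fun b => ⟨b.1.1, mem_dotOrthogonal_range_displacement S σ |>.mpr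
          ⟨congrArg Subtype.val b.2, b.1.2⟩⟩
        invFun := fun b => ⟨⟨b.1, (mem_dotOrthogonal_range_displacement S σ |>.mp b.2).2⟩,
          Subtype.ext (mem_dotOrthogonal_range_displacement S σ |>.mp b.2).1⟩ }
  have hF : Nat.card F.ker * Nat.card F.range = r ^ Fintype.card ι * Nat.card S := by
    rw [← AddSubgroup.index_ker, AddSubgroup.card_mul_index, Nat.card_prod, Nat.card_fun,
      Nat.card_zmod, Nat.card_eq_fintype_card]
  apply Nat.eq_of_mul_eq_mul_right (Nat.card_pos : 0 < Nat.card F.range)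
  rw [hker, hF, hfix, mul_assoc, card_dotOrthogonal_mul_card, mul_comm]

theorem card_orbits_sumAnnihilatedBy [NeZero r] [DecidableEq ι] :
    Nat.card (Quotient (orbitRel (Perm ι) (sumAnnihilatedBy ι S)))
      = Nat.card (Quotient (orbitRel (Perm ι × Multiplicative S) (ι → ZMod r))) := by
  classical
  have hS := sum_natCard_fixedBy_eq_natCard_orbits_mul_natCard (Perm ι) (sumAnnihilatedBy ι S)
  have hG := sum_natCard_fixedBy_eq_natCard_orbits_mul_natCard (Perm ι × Multiplicative S)
    (ι → ZMod r)
  have hσ (σ : Perm ι) : ∑ s : Multiplicative S, Nat.card (fixedBy (ι → ZMod r) (σ, s))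
      = Nat.card S * Nat.card (fixedBy (sumAnnihilatedBy ι S) σ) := by
    rw [← Nat.card_sigma, card_mul_card_fixedBy_sumAnnihilatedBy]
  rw [Fintype.sum_prod_type] at hG
  simp only [hσ, ← Finset.mul_sum, hS, Nat.card_prod] at hG
  apply Nat.eq_of_mul_eq_mul_right (Nat.card_pos : 0 < Nat.card (Perm ι × Multiplicative S))
  rw [Nat.card_prod, ← hG, Nat.card_congr (Multiplicative.toAdd : Multiplicative S ≃ S)]
  ring

end ZMod

section WreathProduct

variable {r d n : ℕ}

def wreathCoords (g : Gr1n r n) : Fin n → ZMod r :=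
  Multiplicative.toAdd ∘ g.left

lemma left_eq_wreathAut_mul_iff {x y : Gr1n r n} {σ : Perm (Fin n)}
    {m : Fin n → Multiplicative (ZMod r)} :
    y.left = wreathAut r n σ x.left * m ↔
      wreathCoords y = σ • wreathCoords x + Multiplicative.toAdd ∘ m := by
  rw [← Multiplicative.toAdd.injective.comp_left.eq_iff]
  rfl

lemma mem_ker_PhiHom_iff [NeZero r] (h : d ∣ r) {g : Gr1n r n} :
    g ∈ (PhiHom r d n h).ker ↔
      wreathCoords g ∈ ZMod.sumAnnihilatedBy (Fin n) (nsmulAddMonoidHom (r / d)).range := by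
  rw [MonoidHom.mem_ker, ZMod.mem_sumAnnihilatedBy, ZMod.forall_mem_range_nsmul_mul_eq_zero_iff,
    ← ZMod.castHom_eq_zero_iff_nsmul_eq_zero h]
  exact ofAdd_eq_one

lemma Qdiag_eq_map_inl : Qdiag r d n =
    ((Pi.constMonoidHom (Fin n) _).comp (powMonoidHom (r / d))).range.map inl := by
  rw [Qdiag, MonoidHom.map_range]
  rfl

theorem card_doubleCoset_ker_eq_card_orbits [NeZero r] (h : d ∣ r) :
    Nat.card (DoubleCoset.Quotient
        (((SnSub r n).subgroupOf (PhiHom r d n h).ker : Subgroup (PhiHom r d n h).ker) :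
          Set (PhiHom r d n h).ker)
        (((SnSub r n).subgroupOf (PhiHom r d n h).ker : Subgroup (PhiHom r d n h).ker) :
          Set (PhiHom r d n h).ker)) =
      Nat.card (Quotient (orbitRel (Perm (Fin n))
        (ZMod.sumAnnihilatedBy (Fin n) (nsmulAddMonoidHom (r / d) : ZMod r →+ ZMod r).range))) := by
  have hH : SnSub r n ≤ (PhiHom r d n h).ker := by
    rintro _ ⟨σ, rfl⟩
    exact (mem_ker_PhiHom_iff h).mpr fun s _ => by simp [wreathCoords]
  refine Setoid.card_quotient_eq_of_surjective
    (fun k => ⟨wreathCoords k.1, (mem_ker_PhiHom_iff h).mp k.2⟩)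
    (fun b => ⟨⟨inl (Multiplicative.ofAdd ∘ b.1), (mem_ker_PhiHom_iff h).mpr b.2⟩, rfl⟩)
    fun x y => ?_
  rw [DoubleCoset.setoid_subgroupOf_iff hH hH, Setoid.comm', SnSub,
    doubleCoset_setoid_range_inr_range_inr_iff, orbitRel_apply, mem_orbit_iff]
  refine exists_congr fun σ => ?_
  rw [← mul_one (wreathAut r n σ _), left_eq_wreathAut_mul_iff, Subtype.ext_iff, eq_comm]
  simp

theorem card_doubleCoset_Qdiag_sup_eq_card_orbits :
    Nat.card (DoubleCoset.Quotient ((SnSub r n : Subgroup (Gr1n r n)) : Set (Gr1n r n))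
        ((Qdiag r d n ⊔ SnSub r n : Subgroup (Gr1n r n)) : Set (Gr1n r n))) =
      Nat.card (Quotient (orbitRel
        (Perm (Fin n) × Multiplicative (nsmulAddMonoidHom (r / d) : ZMod r →+ ZMod r).range)
        (Fin n → ZMod r))) := by
  refine Setoid.card_quotient_eq_of_surjective wreathCoords
    (fun a => ⟨inl (Multiplicative.ofAdd ∘ a), rfl⟩) fun x y => ?_
  rw [Setoid.comm', Qdiag_eq_map_inl, SnSub,
    doubleCoset_setoid_range_inr_iff (by rintro σ _ ⟨μ, rfl⟩; rfl), orbitRel_apply, mem_orbit_iff]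
  constructor
  · rintro ⟨σ, _, ⟨μ, rfl⟩, hx⟩
    exact ⟨(σ, .ofAdd ⟨_, μ.toAdd, rfl⟩), (left_eq_wreathAut_mul_iff.mp hx).symm⟩
  · rintro ⟨⟨σ, _, μ, rfl⟩, hx⟩
    exact ⟨σ, _, ⟨.ofAdd μ, rfl⟩, left_eq_wreathAut_mul_iff.mpr hx.symm⟩

end WreathProduct

/-- With `H = S_n`, `K = G(r,d,n)`, `G = G(r,1,n)` and
`Q = {(μ,…,μ,id) : μ ∈ C_d}` (so `G/K ≅ C_d` and `Q·H ≅ C_d × S_n`), the number of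
double cosets `|H \ K / H|` equals the number of double cosets `|H \ G / (Q·H)|`. -/
theorem card_doset_eq (r d n : ℕ) [NeZero r] (h : d ∣ r) :
    Nat.card (DoubleCoset.Quotient
        (((SnSub r n).subgroupOf (PhiHom r d n h).ker : Subgroup (PhiHom r d n h).ker) :
          Set (PhiHom r d n h).ker)
        (((SnSub r n).subgroupOf (PhiHom r d n h).ker : Subgroup (PhiHom r d n h).ker) :
          Set (PhiHom r d n h).ker))
      = Nat.card (DoubleCoset.Quotient ((SnSub r n : Subgroup (Gr1n r n)) : Set (Gr1n r n))
          ((Qdiag r d n ⊔ SnSub r n : Subgroup (Gr1n r n)) : Set (Gr1n r n))) := by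
  rw [card_doubleCoset_ker_eq_card_orbits h, card_doubleCoset_Qdiag_sup_eq_card_orbits]
  exact ZMod.card_orbits_sumAnnihilatedBy _
end

section
/- Let d | r, p = r/d, γ = (0 1 ⋯ r-1)^p ∈ S_r acting cyclically on indices. For (k_0,...,k_{r-1}) with Σ k_i = n, the linear map φ sending a polynomial f(x_1,...,x_n) to x_1^p ⋯ x_n^p · f(x_1,...,x_n) modulo the relations x_i^r = 1 is an isomorphism of C[G(r,d,n)]-modules from V^{(k_0,...,k_{r-1})} to V^{γ(k_0,...,k_{r-1})}. -/
/-! Multiplying by `x_1^c ⋯ x_n^c` shifts every exponent by `c`, so it carries monomials with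
count vector `k` to those with count vector `k(· - c)`, and the shift by `-c` inverts it.
It commutes with `(ξ^{a_1},…,ξ^{a_n},σ)` up to the scalar `ξ^{-c(a_1+⋯+a_n)}`; for `c = r/d`
this scalar is `1` on `G(r,d,n) = ker Φ`, where `d ∣ a_1+⋯+a_n`. -/

open SemidirectProduct

/-- The character value `ξ^a = exp(2πi·a/r)` for `a ∈ ℤ/rℤ`. -/
noncomputable def chi (r : ℕ) (a : ZMod r) : ℂ :=
  Complex.exp (2 * Real.pi * Complex.I * a.val / r)

/-- The action of `G(r,1,n)` on the ring of polynomials in `n` variables modulo the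
relations `x_i^r = 1`, modelled on the space of coefficient functions indexed by exponent
vectors `m ∈ (ℤ/rℤ)^n` (the monomial `x^m` corresponds to the indicator of `m`):
`(ξ₁,…,ξₙ,σ)·f(x₁,…,xₙ) = f(ξ_{σ(1)}^{-1} x_{σ(1)}, …, ξ_{σ(n)}^{-1} x_{σ(n)})`. -/
noncomputable def act (r n : ℕ) (g : Gr1n r n) (f : (Fin n → ZMod r) → ℂ) :
    (Fin n → ZMod r) → ℂ :=
  fun m => chi r (-∑ j, Multiplicative.toAdd (g.left j) * m j) * f (fun j => m (g.right j))

/-- `countsExp m i` is the number of entries of the exponent vector `m` equal to `i`. -/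
def countsExp (r n : ℕ) (m : Fin n → ZMod r) : ZMod r → ℕ := fun i =>
  (Finset.univ.filter (fun j => m j = i)).card

/-- The module `V^{(k_0,…,k_{r-1})}`: the span of the monomials
`x_{σ(1)}^{λ_1} ⋯ x_{σ(n)}^{λ_n}` where the partition `λ = ψ(k)` has `k_i` parts equal
to `i`, i.e. the coefficient functions supported on exponent vectors with count vector
`k`. -/
def Vmod (r n : ℕ) (k : ZMod r → ℕ) : Set ((Fin n → ZMod r) → ℂ) :=
  {f | ∀ m, f m ≠ 0 → countsExp r n m = k}

/-- Multiplication by `x_1^p ⋯ x_n^p` (with `p = r/d`) modulo `x_i^r = 1`, on coefficient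
functions: it shifts every exponent by `p`. -/
noncomputable def phiMul (r d n : ℕ) (f : (Fin n → ZMod r) → ℂ) :
    (Fin n → ZMod r) → ℂ :=
  fun m => f (fun j => m j - ((r / d : ℕ) : ZMod r))

def expShift {r n : ℕ} (c : ZMod r) (f : (Fin n → ZMod r) → ℂ) : (Fin n → ZMod r) → ℂ :=
  fun m => f (fun j => m j - c)

theorem phiMul_eq_expShift (r d n : ℕ) :
    phiMul r d n = expShift ((r / d : ℕ) : ZMod r) :=
  rfl

section expShift

variable {r n : ℕ}

theorem countsExp_sub_const (m : Fin n → ZMod r) (c : ZMod r) :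
    countsExp r n (fun j => m j - c) = fun i => countsExp r n m (i + c) := by
  funext i
  simp only [countsExp, sub_eq_iff_eq_add]

theorem expShift_mapsTo (c : ZMod r) (k : ZMod r → ℕ) :
    Set.MapsTo (expShift c) (Vmod r n k) (Vmod r n (fun i => k (i - c))) := by
  intro f hf m hm
  have hcount : countsExp r n (fun j => m j - c) = k := hf _ hm
  rw [countsExp_sub_const] at hcount
  funext i
  rw [← hcount]
  exact congrArg (countsExp r n m) (sub_add_cancel i c).symm

theorem expShift_neg_leftInverse (c : ZMod r) :
    Function.LeftInverse (expShift (n := n) (-c)) (expShift c) := by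
  intro f
  funext m
  simp only [expShift, sub_neg_eq_add, add_sub_cancel_right]

theorem expShift_bijOn (c : ZMod r) (k : ZMod r → ℕ) :
    Set.BijOn (expShift c) (Vmod r n k) (Vmod r n (fun i => k (i - c))) := by
  refine Set.InvOn.bijOn ⟨fun f _ => expShift_neg_leftInverse c f, fun f _ => ?_⟩
    (expShift_mapsTo c k) ?_
  · simpa only [neg_neg] using expShift_neg_leftInverse (-c) f
  · simpa only [sub_neg_eq_add, sub_add_cancel, add_sub_cancel_right] using
      expShift_mapsTo (-c) (fun i => k (i - c))

theorem act_expShift (g : Gr1n r n) (c : ZMod r)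
    (hc : c * ∑ j, Multiplicative.toAdd (g.left j) = 0) (f : (Fin n → ZMod r) → ℂ) :
    act r n g (expShift c f) = expShift c (act r n g f) := by
  have hsum (m : Fin n → ZMod r) : ∑ j, Multiplicative.toAdd (g.left j) * (m j - c)
      = ∑ j, Multiplicative.toAdd (g.left j) * m j := by
    simp only [mul_sub, Finset.sum_sub_distrib, mul_comm _ c, ← Finset.mul_sum, hc, sub_zero]
  funext m
  simp only [act, expShift, hsum]

end expShift

theorem ZMod.natCast_div_mul_eq_zero_of_castHom_eq_zero {r d : ℕ} (h : d ∣ r) {a : ZMod r}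
    (ha : ZMod.castHom h (ZMod d) a = 0) : ((r / d : ℕ) : ZMod r) * a = 0 := by
  obtain ⟨t, ht⟩ : (d : ℤ) ∣ (a.cast : ℤ) := by
    rwa [← ZMod.intCast_zmod_eq_zero_iff_dvd, ZMod.intCast_cast, ← ZMod.castHom_apply]
  rw [← ZMod.intCast_zmod_cast a, ht]
  push_cast
  rw [← mul_assoc, ← Nat.cast_mul, Nat.div_mul_cancel h, ZMod.natCast_self, zero_mul]

theorem mem_ker_PhiHom {r d n : ℕ} (h : d ∣ r) (g : Gr1n r n) :
    g ∈ (PhiHom r d n h).ker ↔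
      ZMod.castHom h (ZMod d) (∑ j, Multiplicative.toAdd (g.left j)) = 0 :=
  MonoidHom.mem_ker.trans ofAdd_eq_one

theorem phiMul_module_iso_general (r d n : ℕ) (h : d ∣ r) (k : ZMod r → ℕ) :
    (∀ (c : ℂ) (f₁ f₂ : (Fin n → ZMod r) → ℂ),
      phiMul r d n (c • f₁ + f₂) = c • phiMul r d n f₁ + phiMul r d n f₂) ∧
    Set.BijOn (phiMul r d n) (Vmod r n k)
      (Vmod r n (fun i => k (i - ((r / d : ℕ) : ZMod r)))) ∧
    (∀ g ∈ (PhiHom r d n h).ker, ∀ f : (Fin n → ZMod r) → ℂ,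
      act r n g (phiMul r d n f) = phiMul r d n (act r n g f)) := by
  rw [phiMul_eq_expShift]
  refine ⟨fun _ _ _ => rfl, expShift_bijOn _ k, fun g hg f => act_expShift g _ ?_ f⟩
  exact ZMod.natCast_div_mul_eq_zero_of_castHom_eq_zero h ((mem_ker_PhiHom h g).1 hg)

/-- Let `d ∣ r`, `p = r/d`, and `γ = (0 1 ⋯ r-1)^p` acting cyclically,
so that `(γk)_i = k_{i-p}`. For `(k_0,…,k_{r-1})` with `Σ k_i = n`, the map
`f ↦ x_1^p ⋯ x_n^p · f` (modulo `x_i^r = 1`) is an isomorphism of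
`ℂ[G(r,d,n)]`-modules `V^{(k_0,…,k_{r-1})} ≅ V^{γ(k_0,…,k_{r-1})}`: it is ℂ-linear,
restricts to a bijection `V^k → V^{γk}`, and commutes with the action of every element
of `G(r,d,n)`. -/
theorem phiMul_module_iso (r d n : ℕ) [NeZero r] (h : d ∣ r) (k : ZMod r → ℕ)
    (hk : ∑ i, k i = n) :
    (∀ (c : ℂ) (f₁ f₂ : (Fin n → ZMod r) → ℂ),
      phiMul r d n (c • f₁ + f₂) = c • phiMul r d n f₁ + phiMul r d n f₂) ∧
    Set.BijOn (phiMul r d n) (Vmod r n k)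
      (Vmod r n (fun i => k (i - ((r / d : ℕ) : ZMod r)))) ∧
    (∀ g ∈ (PhiHom r d n h).ker, ∀ f : (Fin n → ZMod r) → ℂ,
      act r n g (phiMul r d n f) = phiMul r d n (act r n g f)) :=
  phiMul_module_iso_general r d n h k
end

section
/- For the Krawtchouk polynomials K_n(x; 1/2, N) = ₂F₁(-x, -n; -N; 2) with 0 ≤ x, y, n ≤ N natural numbers and x ≤ y, the product formula holds: K_n(x;1/2,N)·K_n(y;1/2,N) = binom(N,x)^{-1} · Σ_{i} binom(N-y, x-i)·binom(y, i)·K_n(x+y-2i; 1/2, N), where the sum runs over max{0, x+y-N} ≤ i ≤ x. -/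
/-!
Let `S` be an `N`-set and `χ_b(a) = (-1)^#(a ∩ b)` for `a, b ⊆ S`. Averaging over the
`n`-subsets `b` gives `binom(N, n) K_n(#a) = ∑_b χ_b(a)`: after expanding
`(-1)^m = ∑_j binom(m, j) (-2)^j` this is the double count
`∑_b binom(#(a ∩ b), j) binom(N, j) = binom(#a, j) binom(n, j) binom(N, n)`.
By the symmetry `K_n(x) = K_x(n)`, the sum of `χ_b` over the `x`-subsets is `binom(N, x) K_n(x)`.
Multiplying these sums for `x` and `y`, using `χ_b(a) χ_b(a') = χ_b(a ∆ a')` and averaging over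
`b` gives `binom(N, x) K_n(x) binom(N, y) K_n(y) = ∑_{#a' = y} ∑_{#a = x} K_n(#(a ∆ a'))`.
Since `#(a ∆ a') = x + y - 2 #(a ∩ a')` and exactly `binom(y, i) binom(N - y, x - i)` of the
`x`-subsets meet a given `y`-subset in `i` points, the right side is `binom(N, y)` times the sum
in the formula.
-/

/-- The Krawtchouk polynomial `K_n(x; 1/2, N) = ₂F₁(-x, -n; -N; 2)`, as the terminating
hypergeometric sum `∑_{j=0}^{min(x,n)} ((-x)_j (-n)_j / ((-N)_j j!)) 2^j`. -/
noncomputable def krawtchouk (n x N : ℕ) : ℚ :=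
  ∑ j ∈ Finset.range (min x n + 1),
    ((ascPochhammer ℚ j).eval (-(x : ℚ)) * (ascPochhammer ℚ j).eval (-(n : ℚ)))
      / ((ascPochhammer ℚ j).eval (-(N : ℚ)) * (Nat.factorial j)) * 2 ^ j

open Finset symmDiff

namespace Finset
variable {α : Type*} [DecidableEq α]

theorem card_symmDiff_add_two_mul_card_inter (s t : Finset α) :
    #(s ∆ t) + 2 * #(s ∩ t) = #s + #t := by
  have h : #(s ∆ t ∪ s ∩ t) = #(s ∆ t) + #(s ∩ t) :=
    card_union_of_disjoint (disjoint_symmDiff_inf s t)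
  rw [show s ∆ t ∪ s ∩ t = s ∪ t from symmDiff_sup_inf s t] at h
  have := card_union_add_card_inter s t
  omega

theorem card_filter_powersetCard_card_inter {S c : Finset α} (hcS : c ⊆ S) {j k : ℕ}
    (hjk : j ≤ k) :
    #{a ∈ S.powersetCard k | #(a ∩ c) = j} = (#c).choose j * (#S - #c).choose (k - j) := by
  rw [← card_sdiff_of_subset hcS, ← card_powersetCard, ← card_powersetCard, ← card_product]
  refine card_nbij' (fun a => (a ∩ c, a \ c)) (fun p => p.1 ∪ p.2) ?_ ?_ ?_ ?_
  · intro a ha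
    simp only [coe_filter, mem_powersetCard, Set.mem_ofPred_eq] at ha
    obtain ⟨⟨haS, rfl⟩, rfl⟩ := ha
    simp only [coe_product, Set.mem_prod, mem_coe, mem_powersetCard]
    refine ⟨⟨inter_subset_right, trivial⟩, sdiff_subset_sdiff haS le_rfl, ?_⟩
    have := card_sdiff_add_card_inter a c
    omega
  · rintro ⟨u, v⟩ huv
    simp only [coe_product, Set.mem_prod, mem_coe, mem_powersetCard, subset_sdiff] at huv
    obtain ⟨⟨huc, rfl⟩, ⟨hvS, hvc⟩, hv⟩ := huv
    have hd : Disjoint u v := disjoint_of_subset_left huc hvc.symm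
    simp only [coe_filter, mem_powersetCard, Set.mem_ofPred_eq]
    refine ⟨⟨union_subset (huc.trans hcS) hvS, ?_⟩, ?_⟩
    · rw [card_union_of_disjoint hd, hv]; omega
    · rw [union_inter_distrib_right, inter_eq_left.mpr huc,
        disjoint_iff_inter_eq_empty.mp hvc, union_empty]
  · intro a _
    exact (union_comm _ _).trans (sdiff_union_inter a c)
  · rintro ⟨u, v⟩ huv
    simp only [coe_product, Set.mem_prod, mem_coe, mem_powersetCard, subset_sdiff] at huv
    obtain ⟨⟨huc, -⟩, ⟨-, hvc⟩, -⟩ := huv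
    simp only [union_inter_distrib_right, inter_eq_left.mpr huc,
        disjoint_iff_inter_eq_empty.mp hvc, union_empty, union_sdiff_distrib,
        sdiff_eq_empty_iff_subset.mpr huc, empty_union, sdiff_eq_self_of_disjoint hvc]

theorem sum_powersetCard_apply_card_inter {M : Type*} [AddCommMonoid M] {S c : Finset α}
    (hcS : c ⊆ S) (k : ℕ) (f : ℕ → M) :
    ∑ a ∈ S.powersetCard k, f #(a ∩ c)
      = ∑ j ∈ range (k + 1), ((#c).choose j * (#S - #c).choose (k - j)) • f j := by
  rw [← sum_fiberwise_of_maps_to (g := fun a => #(a ∩ c)) (t := range (k + 1))]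
  · refine sum_congr rfl fun j hj => ?_
    rw [sum_congr rfl fun a ha => congrArg f (mem_filter.mp ha).2, sum_const,
      card_filter_powersetCard_card_inter hcS (Nat.lt_succ_iff.mp (mem_range.mp hj))]
  · intro a ha
    rw [mem_range, Nat.lt_succ_iff, ← (mem_powersetCard.mp ha).2]
    exact card_le_card inter_subset_left

theorem sum_powersetCard_choose_card_inter_mul {S a : Finset α} (haS : a ⊆ S) (n j : ℕ) :
    (∑ b ∈ S.powersetCard n, (#(a ∩ b)).choose j) * (#S).choose j
      = (#a).choose j * n.choose j * (#S).choose n := by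
  rcases lt_or_ge n j with hnj | hjn
  · rw [Nat.choose_eq_zero_of_lt hnj, mul_zero, zero_mul, sum_eq_zero, zero_mul]
    intro b hb
    refine Nat.choose_eq_zero_of_lt (lt_of_le_of_lt ?_ hnj)
    exact (card_le_card inter_subset_right).trans (mem_powersetCard.mp hb).2.le
  have double_count : ∑ b ∈ S.powersetCard n, (#(a ∩ b)).choose j
      = ∑ d ∈ a.powersetCard j, #{b ∈ S.powersetCard n | d ⊆ b} := by
    rw [sum_congr rfl fun b _ => (card_powersetCard j (a ∩ b)).symm]
    simp only [card_eq_sum_ones]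
    refine sum_comm' fun b d => ?_
    simp only [mem_powersetCard, mem_filter, subset_inter_iff]
    tauto
  have count : ∀ d ∈ a.powersetCard j, #{b ∈ S.powersetCard n | d ⊆ b}
      = (#S - j).choose (n - j) := by
    intro d hd
    obtain ⟨hda, rfl⟩ := mem_powersetCard.mp hd
    exact card_filter_powersetCard_subset d S n (hda.trans haS) hjn
  rw [double_count, sum_congr rfl count, sum_const, card_powersetCard, smul_eq_mul, mul_assoc,
    mul_comm _ ((#S).choose j), ← Nat.choose_mul hjn]
  ring

theorem sum_powersetCard_apply_card_symmDiff {M : Type*} [AddCommMonoid M] {S c : Finset α}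
    (hcS : c ⊆ S) (k : ℕ) (f : ℕ → M) :
    ∑ a ∈ S.powersetCard k, f #(a ∆ c)
      = ∑ i ∈ range (k + 1),
          ((#c).choose i * (#S - #c).choose (k - i)) • f (k + #c - 2 * i) := by
  rw [← sum_powersetCard_apply_card_inter hcS k]
  refine sum_congr rfl fun a ha => congrArg f ?_
  have := card_symmDiff_add_two_mul_card_inter a c
  rw [(mem_powersetCard.mp ha).2] at this
  omega

end Finset

theorem neg_one_pow_eq_sum_range_choose {R : Type*} [CommRing R] {m L : ℕ} (hmL : m ≤ L) :
    (-1 : R) ^ m = ∑ j ∈ range (L + 1), (-2) ^ j * (m.choose j : R) := by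
  rw [show (-1 : R) = -2 + 1 by norm_num, add_pow]
  simp only [one_pow, mul_one]
  refine sum_subset (range_subset_range.mpr (by omega)) fun j _ hj => ?_
  rw [Nat.choose_eq_zero_of_lt (by simpa using hj), Nat.cast_zero, mul_zero]

theorem neg_one_pow_card_inter_mul {α R : Type*} [DecidableEq α] [Ring R]
    (a a' b : Finset α) :
    (-1 : R) ^ #(a ∩ b) * (-1) ^ #(a' ∩ b) = (-1) ^ #((a ∆ a') ∩ b) := by
  have h := card_symmDiff_add_two_mul_card_inter (a ∩ b) (a' ∩ b)
  have hd : (a ∆ a') ∩ b = (a ∩ b) ∆ (a' ∩ b) := inf_symmDiff_distrib_right a a' b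
  rw [← pow_add, ← h, hd, pow_add, pow_mul]
  simp

theorem krawtchouk_comm (n x N : ℕ) : krawtchouk n x N = krawtchouk x n N := by
  simp only [krawtchouk, min_comm x n, mul_comm ((ascPochhammer ℚ _).eval (-(x : ℚ)))]

theorem krawtchouk_eq_sum_choose (n x N : ℕ) :
    krawtchouk n x N = ∑ j ∈ range (min x n + 1),
      (-2 : ℚ) ^ j * x.choose j * n.choose j / N.choose j := by
  have eval_neg (m j : ℕ) :
      (ascPochhammer ℚ j).eval (-(m : ℚ)) = (-1) ^ j * (j.factorial * m.choose j) := by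
    rw [ascPochhammer_eval_neg_eq_descPochhammer, descPochhammer_eval_eq_descFactorial,
      Nat.descFactorial_eq_factorial_mul_choose]
    push_cast
    ring
  refine sum_congr rfl fun j _ => ?_
  rw [eval_neg, eval_neg, eval_neg, neg_pow (2 : ℚ)]
  rcases eq_or_ne (N.choose j : ℚ) 0 with hN | hN
  · simp [hN]
  · have : (j.factorial : ℚ) ≠ 0 := by positivity
    field_simp

section SphericalFunction

variable {α : Type*} [DecidableEq α] {S : Finset α}

theorem choose_mul_krawtchouk_card_eq_sum {a : Finset α} (haS : a ⊆ S) {n : ℕ}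
    (hn : n ≤ #S) :
    (#S).choose n * krawtchouk n #a #S = ∑ b ∈ S.powersetCard n, (-1 : ℚ) ^ #(a ∩ b) := by
  rw [krawtchouk_eq_sum_choose, mul_sum]
  calc ∑ j ∈ range (min #a n + 1),
        ((#S).choose n : ℚ) * ((-2) ^ j * (#a).choose j * n.choose j / (#S).choose j)
      = ∑ j ∈ range (min #a n + 1),
          (-2) ^ j * ∑ b ∈ S.powersetCard n, ((#(a ∩ b)).choose j : ℚ) := by
        refine sum_congr rfl fun j hj => ?_
        have hjS : ((#S).choose j : ℚ) ≠ 0 := by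
          have hjn : j ≤ n := (Nat.lt_succ_iff.mp (mem_range.mp hj)).trans (min_le_right _ _)
          exact_mod_cast (Nat.choose_pos (hjn.trans hn)).ne'
        have moment : ∑ b ∈ S.powersetCard n, ((#(a ∩ b)).choose j : ℚ)
            = (#a).choose j * n.choose j * (#S).choose n / (#S).choose j :=
          eq_div_of_mul_eq hjS (by exact_mod_cast sum_powersetCard_choose_card_inter_mul haS n j)
        rw [moment]
        ring
    _ = ∑ b ∈ S.powersetCard n,
          ∑ j ∈ range (min #a n + 1), (-2) ^ j * ((#(a ∩ b)).choose j : ℚ) := by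
        simp_rw [mul_sum]
        exact sum_comm
    _ = ∑ b ∈ S.powersetCard n, (-1 : ℚ) ^ #(a ∩ b) := by
        refine sum_congr rfl fun b hb => (neg_one_pow_eq_sum_range_choose ?_).symm
        exact le_min (card_le_card inter_subset_left)
          ((card_le_card inter_subset_right).trans (mem_powersetCard.mp hb).2.le)

theorem sum_powersetCard_neg_one_pow_card_inter {b : Finset α} (hbS : b ⊆ S) {w : ℕ}
    (hw : w ≤ #S) :
    ∑ a ∈ S.powersetCard w, (-1 : ℚ) ^ #(a ∩ b) = (#S).choose w * krawtchouk #b w #S := by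
  rw [krawtchouk_comm, choose_mul_krawtchouk_card_eq_sum hbS hw]
  exact sum_congr rfl fun a _ => by rw [inter_comm]

theorem sum_sum_krawtchouk_card_symmDiff {n x y : ℕ} (hn : n ≤ #S) (hx : x ≤ #S)
    (hy : y ≤ #S) :
    ∑ a' ∈ S.powersetCard y, ∑ a ∈ S.powersetCard x, krawtchouk n #(a ∆ a') #S
      = (#S).choose y * krawtchouk n y #S * ((#S).choose x * krawtchouk n x #S) := by
  have hnS : ((#S).choose n : ℚ) ≠ 0 := by exact_mod_cast (Nat.choose_pos hn).ne'
  refine mul_left_cancel₀ hnS ?_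
  calc _ = ∑ b ∈ S.powersetCard n, (∑ a' ∈ S.powersetCard y, (-1 : ℚ) ^ #(a' ∩ b)) *
            ∑ a ∈ S.powersetCard x, (-1 : ℚ) ^ #(a ∩ b) := by
        simp_rw [sum_mul_sum, neg_one_pow_card_inter_mul]
        rw [mul_sum, sum_comm]
        refine sum_congr rfl fun a' ha' => ?_
        rw [mul_sum, sum_comm]
        refine sum_congr rfl fun a ha => ?_
        have hS : a ∆ a' ⊆ S := symmDiff_le_sup.trans
          (union_subset (mem_powersetCard.mp ha).1 (mem_powersetCard.mp ha').1)
        rw [choose_mul_krawtchouk_card_eq_sum hS hn, symmDiff_comm]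
    _ = _ := by
        rw [sum_congr rfl fun b hb => ?_, sum_const, card_powersetCard, nsmul_eq_mul]
        obtain ⟨hbS, hbn⟩ := mem_powersetCard.mp hb
        rw [sum_powersetCard_neg_one_pow_card_inter hbS hy,
          sum_powersetCard_neg_one_pow_card_inter hbS hx, hbn]

end SphericalFunction

/-- Product formula for the Krawtchouk polynomials `K_n(x; 1/2, N)`:
for `x ≤ y ≤ N` and `n ≤ N`,
`K_n(x)·K_n(y) = binom(N,x)⁻¹ Σ_i binom(N-y, x-i) binom(y, i) K_n(x+y-2i)`,
where the binomial coefficients vanish outside `max{0, x+y-N} ≤ i ≤ x`. -/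
theorem krawtchouk_product_formula (N n x y : ℕ) (hxy : x ≤ y) (hyN : y ≤ N) (hnN : n ≤ N) :
    krawtchouk n x N * krawtchouk n y N
      = ((N.choose x : ℚ))⁻¹ *
        ∑ i ∈ Finset.range (x + 1),
          ((N - y).choose (x - i) : ℚ) * (y.choose i : ℚ) * krawtchouk n (x + y - 2 * i) N := by
  have hxN := hxy.trans hyN
  have inner : ∀ a' ∈ (range N).powersetCard y,
      ∑ a ∈ (range N).powersetCard x, krawtchouk n #(a ∆ a') N
        = ∑ i ∈ range (x + 1),
            ((N - y).choose (x - i) : ℚ) * y.choose i * krawtchouk n (x + y - 2 * i) N := by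
    intro a' ha'
    obtain ⟨ha'S, rfl⟩ := mem_powersetCard.mp ha'
    rw [sum_powersetCard_apply_card_symmDiff ha'S x (krawtchouk n · N), card_range]
    refine sum_congr rfl fun i _ => ?_
    rw [nsmul_eq_mul]
    push_cast
    ring
  have product := sum_sum_krawtchouk_card_symmDiff (S := range N) (n := n) (x := x) (y := y)
  rw [card_range, sum_congr rfl inner, sum_const, card_powersetCard, card_range,
    nsmul_eq_mul] at product
  have choose_ne_zero {k : ℕ} (hk : k ≤ N) : (N.choose k : ℚ) ≠ 0 := by
    exact_mod_cast (Nat.choose_pos hk).ne'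
  rw [inv_mul_eq_div, eq_div_iff (choose_ne_zero hxN)]
  refine mul_left_cancel₀ (choose_ne_zero hyN) ?_
  linear_combination -product hnN hxN hyN
end

section
/- For the Gelfand pair (G(r,1,n), S_n) with the Hamming distance on G(r,1,n)/S_n, the zonal spherical function ω^{(k_0,...,k_{r-1})} is an eigenfunction of the Laplace operator Δ_1 (summing over nearest neighbors at Hamming distance 1) with eigenvalue n(r-1) - r·(k_1 + ... + k_{r-1}). Equivalently, Σ_{j=1}^{r-1} n·(1 - Σ_{i=1}^{r-1} (k_i/n)(1 - ξ^{ij})) = n(r-1) - r·Σ_{i=1}^{r-1} k_i, where ξ = exp(2πi/r). -/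
open Complex

/-- For the Gelfand pair `(G(r,1,n), S_n)` with the Hamming distance, the
zonal spherical function `ω^{(k_0,…,k_{r-1})}` is an eigenfunction of the Laplace operator
`Δ_1` with eigenvalue `n(r-1) - r(k_1 + ⋯ + k_{r-1})`; equivalently (summing the values of
the spherical function over the `n(r-1)` nearest neighbours of the identity coset, whose
double cosets are `(n-1, 0, …, 0, l_j = 1, 0, …, 0)` with spherical value
`1 - Σ_{i=1}^{r-1} (k_i/n)(1 - ξ^{ij})`):
`Σ_{j=1}^{r-1} n·(1 - Σ_{i=1}^{r-1} (k_i/n)(1 - ξ^{ij})) = n(r-1) - r·Σ_{i=1}^{r-1} k_i`,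
where `ξ = exp(2πi/r)`. -/
theorem laplace_eigenvalue_Grn (r n : ℕ) (hr : 0 < r) (hn : 0 < n) (k : ℕ → ℕ)
    (hk : ∑ i ∈ Finset.range r, k i = n) :
    ∑ j ∈ Finset.Icc 1 (r - 1), (n : ℂ) *
        (1 - ∑ i ∈ Finset.Icc 1 (r - 1),
          ((k i : ℂ) / (n : ℂ)) * (1 - Complex.exp (2 * Real.pi * I / r) ^ (i * j)))
      = (n : ℂ) * ((r : ℂ) - 1) - (r : ℂ) * ∑ i ∈ Finset.Icc 1 (r - 1), (k i : ℂ) := by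
  have hnC : (n : ℂ) ≠ 0 := Nat.cast_ne_zero.mpr hn.ne'
  set ξ : ℂ := Complex.exp (2 * Real.pi * I / r) with hξ
  have hprim : IsPrimitiveRoot ξ r := Complex.isPrimitiveRoot_exp r hr.ne'
  have hIcc : Finset.Icc 1 (r - 1) = (Finset.range r).erase 0 := by
    ext x
    simp only [Finset.mem_Icc, Finset.mem_erase, Finset.mem_range]
    omega
  have key : ∀ i ∈ Finset.Icc 1 (r - 1), ∑ j ∈ Finset.Icc 1 (r - 1), ξ ^ (i * j) = -1 := by
    intro i hi
    obtain ⟨hi1, hi2⟩ := Finset.mem_Icc.mp hi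
    have hne : ξ ^ i ≠ 1 := by
      intro h
      have hd := (hprim.pow_eq_one_iff_dvd i).mp h
      have := Nat.le_of_dvd (by omega) hd
      omega
    have hpow : (ξ ^ i) ^ r = 1 := by
      rw [← pow_mul, mul_comm, pow_mul, hprim.pow_eq_one, one_pow]
    have h0 : ∑ j ∈ Finset.range r, (ξ ^ i) ^ j = 0 := by
      rw [geom_sum_eq hne, hpow]
      simp
    have hsplit : ∑ j ∈ Finset.range r, (ξ ^ i) ^ j
        = (ξ ^ i) ^ 0 + ∑ j ∈ (Finset.range r).erase 0, (ξ ^ i) ^ j :=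
      (Finset.add_sum_erase _ _ (Finset.mem_range.mpr hr)).symm
    have : ∑ j ∈ (Finset.range r).erase 0, (ξ ^ i) ^ j = -1 := by
      rw [hsplit] at h0
      simp only [pow_zero] at h0
      linear_combination h0
    rw [hIcc]
    simpa [pow_mul] using this
  have card1 : ((Finset.Icc 1 (r - 1)).card : ℂ) = (r : ℂ) - 1 := by
    rw [Nat.card_Icc, Nat.sub_add_cancel hr, Nat.cast_sub hr]
    simp
  calc ∑ j ∈ Finset.Icc 1 (r - 1), (n : ℂ) *
        (1 - ∑ i ∈ Finset.Icc 1 (r - 1), ((k i : ℂ) / (n : ℂ)) * (1 - ξ ^ (i * j)))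
      = ∑ j ∈ Finset.Icc 1 (r - 1),
          ((n : ℂ) - ∑ i ∈ Finset.Icc 1 (r - 1), (k i : ℂ) * (1 - ξ ^ (i * j))) := by
        refine Finset.sum_congr rfl fun j _ => ?_
        rw [mul_sub, mul_one, Finset.mul_sum]
        congr 1
        refine Finset.sum_congr rfl fun i _ => ?_
        field_simp
    _ = ((r : ℂ) - 1) * n - ∑ i ∈ Finset.Icc 1 (r - 1),
          (k i : ℂ) * ∑ j ∈ Finset.Icc 1 (r - 1), (1 - ξ ^ (i * j)) := by
        rw [Finset.sum_sub_distrib, Finset.sum_const, nsmul_eq_mul, card1,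
          Finset.sum_comm]
        congr 1
        exact Finset.sum_congr rfl fun i _ => (Finset.mul_sum _ _ _).symm
    _ = ((r : ℂ) - 1) * n - ∑ i ∈ Finset.Icc 1 (r - 1), (k i : ℂ) * r := by
        congr 1
        refine Finset.sum_congr rfl fun i hi => ?_
        rw [Finset.sum_sub_distrib, key i hi, Finset.sum_const, nsmul_eq_mul, card1]
        ring_nf
    _ = (n : ℂ) * ((r : ℂ) - 1) - (r : ℂ) * ∑ i ∈ Finset.Icc 1 (r - 1), (k i : ℂ) := by
        rw [← Finset.sum_mul]
        ring
end
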